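/- arXiv:math/0311464 — 6 statements merged into one kernel-verified Lean document; each statement's English description precedes it below -/
import Mathlib

section
/- Let φ: ℝ → ℝ be smooth, compactly supported in [-1,1], nonnegative, with ∫_ℝ φ(x)dx = 1, and for ε ∈ (0,1) set φ_ε(x) = |log ε|·φ(x·|log ε|). Let ᾱ > 0, let n ∈ ℕ with n > ᾱ, and let T > 0. Then there is a constant C (independent of ε) such that for all ε ∈ (0, e^{-1}): ∫_0^T | (1/Γ(n-ᾱ)) ∫_0^t (t-τ)^{n-ᾱ-1} φ_ε^{(n)}(τ) dτ | dt ≤ C·|log ε|^n. (This is the L¹ bound of the regularized fractional integral J^{-ᾱ}φ_ε of negative order -ᾱ, computed by transferring n derivatives onto the mollifier.) -/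
open MeasureTheory Real Set
open scoped NNReal ENNReal

lemma support_iteratedDeriv_subset'' (f : ℝ → ℝ) (n : ℕ) :
    Function.support (iteratedDeriv n f) ⊆ tsupport f := by
  induction n with
  | zero => simpa [iteratedDeriv_zero] using subset_tsupport f
  | succ n ih =>
    rw [iteratedDeriv_succ]
    exact support_deriv_subset.trans (closure_minimal ih isClosed_closure)

/-- L¹ bound for the regularized fractional integral of negative
order `-ᾱ` of the delta sequence, computed by transferring `n` derivatives
onto the mollifier: for `n > ᾱ > 0`,
`∫_0^T |(1/Γ(n-ᾱ)) ∫_0^t (t-τ)^{n-ᾱ-1} φ_ε^{(n)}(τ) dτ| dt ≤ C·|log ε|^n`. -/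
theorem stmt_2
    (φ : ℝ → ℝ) (hφ : ContDiff ℝ (⊤ : ℕ∞) φ)
    (hsupp : Function.support φ ⊆ Icc (-1 : ℝ) 1)
    (hpos : ∀ x, 0 ≤ φ x)
    (hint : ∫ x, φ x = 1)
    (αb : ℝ) (hαb : 0 < αb) (n : ℕ) (hn : αb < n)
    (T : ℝ) (hT : 0 < T) :
    ∃ C : ℝ, ∀ ε ∈ Ioo (0 : ℝ) (Real.exp (-1)),
      ∫ t in Ioc (0 : ℝ) T,
          |(1 / Real.Gamma ((n : ℝ) - αb)) *
            ∫ τ in Ioc (0 : ℝ) t,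
              (t - τ) ^ ((n : ℝ) - αb - 1) *
                iteratedDeriv n (fun y => |Real.log ε| * φ (y * |Real.log ε|)) τ|
        ≤ C * |Real.log ε| ^ n := by
  set β : ℝ := (n : ℝ) - αb with hβdef
  have hβ : 0 < β := by
    have : αb < (n : ℝ) := hn
    simp only [hβdef]; linarith
  have hΓ : 0 < Real.Gamma β := Real.Gamma_pos_of_pos hβ
  set ψ : ℝ → ℝ := iteratedDeriv n φ with hψdef
  have hψc : Continuous ψ := hφ.continuous_iteratedDeriv n (by exact_mod_cast le_top)
  have hψsupp : Function.support ψ ⊆ Icc (-1 : ℝ) 1 :=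
    (support_iteratedDeriv_subset'' φ n).trans (closure_minimal hsupp isClosed_Icc)
  have hψcs : HasCompactSupport ψ :=
    HasCompactSupport.intro isCompact_Icc (fun x hx => by
      by_contra h
      exact hx (hψsupp h))
  have hψint : Integrable ψ := hψc.integrable_of_hasCompactSupport hψcs
  set A : ℝ := ∫ x, |ψ x| with hAdef
  have hA0 : 0 ≤ A := integral_nonneg (fun x => abs_nonneg _)
  refine ⟨(1 / Real.Gamma β) * (T ^ β / β) * A, ?_⟩
  intro ε hε
  set L : ℝ := |Real.log ε| with hLdef
  have hlog : Real.log ε < -1 := by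
    have := Real.log_lt_log hε.1 hε.2
    rwa [Real.log_exp] at this
  have hL1 : 1 < L := by
    rw [hLdef, abs_of_neg (by linarith : Real.log ε < 0)]; linarith
  have hL0 : 0 < L := lt_trans one_pos hL1
  -- the scaled mollifier and its derivative
  set g : ℝ → ℝ := fun τ => L ^ (n + 1) * ψ (τ * L) with hgdef
  have hgc : Continuous g :=
    continuous_const.mul (hψc.comp (continuous_id.mul continuous_const))
  have hgsupp : ∀ x, x ∉ Icc (-1 : ℝ) 1 → g x = 0 := by
    intro x hx
    have hx1 : 1 < |x| := by
      rw [Set.mem_Icc, not_and_or] at hx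
      rcases hx with h | h
      · rw [abs_of_neg (by linarith [lt_of_not_ge h])]; linarith [lt_of_not_ge h]
      · rw [abs_of_pos (by linarith [lt_of_not_ge h])]; linarith [lt_of_not_ge h]
    have : ψ (x * L) = 0 := by
      by_contra h
      have := hψsupp (Function.mem_support.mpr h)
      have habs : |x * L| ≤ 1 := abs_le.mpr (by exact ⟨this.1, this.2⟩)
      rw [abs_mul, abs_of_pos hL0] at habs
      nlinarith
    simp [hgdef, this]
  have hgcs : HasCompactSupport g :=
    HasCompactSupport.intro isCompact_Icc hgsupp
  have hgint : Integrable g := hgc.integrable_of_hasCompactSupport hgcs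
  -- identify the iterated derivative
  have hD : iteratedDeriv n (fun y => L * φ (y * L)) = g := by
    have hmc : (fun y : ℝ => L * φ (y * L)) = fun y => L * φ (L * y) := by
      funext y; rw [mul_comm y L]
    funext τ
    rw [hmc]
    have houter : iteratedDeriv n (fun y : ℝ => L * φ (L * y)) τ
        = L * iteratedDeriv n (fun y : ℝ => φ (L * y)) τ := by
      rw [← iteratedDerivWithin_univ, ← iteratedDerivWithin_univ]
      exact iteratedDerivWithin_const_mul (Set.mem_univ τ) uniqueDiffOn_univ L
        (((hφ.of_le (by exact_mod_cast le_top)).comp (contDiff_const.mul contDiff_id)).contDiffWithinAt)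
    rw [houter, iteratedDeriv_comp_const_mul (hφ.of_le (by exact_mod_cast le_top)) L]
    simp only [hgdef, ← hψdef]
    rw [mul_comm τ L, ← mul_assoc, ← pow_succ']
  rw [hD]
  -- ∫ |g| = L^n * A
  have hgabs : ∫ τ, |g τ| = L ^ n * A := by
    have h1 : (fun τ => |g τ|) = fun τ => L ^ (n + 1) * |ψ (τ * L)| := by
      funext τ
      rw [hgdef]
      rw [abs_mul, abs_of_nonneg (by positivity : (0:ℝ) ≤ L ^ (n + 1))]
    rw [h1, MeasureTheory.integral_const_mul,
      MeasureTheory.Measure.integral_comp_mul_right (fun x => |ψ x|) L, smul_eq_mul,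
      abs_inv, abs_of_pos hL0, ← hAdef]
    rw [pow_succ]
    field_simp
  -- measurability of the rpow kernel
  have hrpow : Measurable fun x : ℝ => x ^ (β - 1) :=
    measurable_of_continuousOn_compl_singleton 0 (fun x hx =>
      (Real.continuousAt_rpow_const x _ (Or.inl (by simpa using hx))).continuousWithinAt)
  -- the ENNReal kernel
  set f : ℝ → ℝ → ℝ≥0∞ := fun t τ =>
    (Ioc (0:ℝ) t).indicator (fun s => ENNReal.ofReal |(t - s) ^ (β - 1)|) τ
      * ENNReal.ofReal |g τ| with hfdef
  have hfmeas : AEMeasurable (Function.uncurry f)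
      ((volume.restrict (Ioc (0:ℝ) T)).prod volume) := by
    have hset : MeasurableSet {p : ℝ × ℝ | 0 < p.2 ∧ p.2 ≤ p.1} :=
      (measurableSet_lt measurable_const measurable_snd).inter
        (measurableSet_le measurable_snd measurable_fst)
    have h1 : Function.uncurry f = fun p : ℝ × ℝ =>
        {q : ℝ × ℝ | 0 < q.2 ∧ q.2 ≤ q.1}.indicator
          (fun q => ENNReal.ofReal |(q.1 - q.2) ^ (β - 1)|) p * ENNReal.ofReal |g p.2| := by
      funext p
      rcases p with ⟨t, τ⟩
      by_cases h : τ ∈ Ioc (0:ℝ) t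
      · rw [Function.uncurry, hfdef]
        simp only
        rw [Set.indicator_of_mem h,
          Set.indicator_of_mem (show (t,τ) ∈ {q : ℝ × ℝ | 0 < q.2 ∧ q.2 ≤ q.1} from ⟨h.1, h.2⟩)]
      · have h' : (t, τ) ∉ {q : ℝ × ℝ | 0 < q.2 ∧ q.2 ≤ q.1} := by
          simpa [Set.mem_Ioc] using h
        rw [Function.uncurry, hfdef]
        simp only
        rw [Set.indicator_of_notMem h, Set.indicator_of_notMem h']
    rw [h1]
    exact ((((hrpow.comp (measurable_fst.sub measurable_snd)).abs.ennreal_ofReal).indicator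
      hset).mul ((hgc.abs.measurable.comp measurable_snd).ennreal_ofReal)).aemeasurable
  have hC1 : (0:ℝ) ≤ 1 / Real.Gamma β := by positivity
  -- pointwise bound on the norm of the inner integral
  have hinner_nn : ∀ t : ℝ,
      (‖(1 / Real.Gamma β) * ∫ τ in Ioc (0:ℝ) t, (t - τ) ^ (β - 1) * g τ‖₊ : ℝ≥0∞)
        ≤ ENNReal.ofReal (1 / Real.Gamma β) * ∫⁻ τ, f t τ := by
    intro t
    have h1 : ∫⁻ τ, f t τ = ∫⁻ τ in Ioc (0:ℝ) t,
        ENNReal.ofReal |(t - τ) ^ (β - 1)| * ENNReal.ofReal |g τ| := by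
      rw [← lintegral_indicator measurableSet_Ioc]
      congr 1
      funext τ
      by_cases h : τ ∈ Ioc (0:ℝ) t
      · rw [hfdef]; simp only
        rw [Set.indicator_of_mem h, Set.indicator_of_mem h]
      · rw [hfdef]; simp only
        rw [Set.indicator_of_notMem h, Set.indicator_of_notMem h, zero_mul]
    rw [h1, nnnorm_mul, ENNReal.coe_mul, ← enorm_eq_nnnorm, Real.enorm_eq_ofReal hC1]
    refine mul_le_mul_right ?_ _
    refine (enorm_integral_le_lintegral_enorm _).trans ?_
    refine lintegral_mono (fun τ => le_of_eq ?_)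
    rw [enorm_mul, Real.enorm_eq_ofReal_abs, Real.enorm_eq_ofReal_abs]
  have hswap : ∫⁻ t in Ioc (0:ℝ) T, ∫⁻ τ, f t τ
      = ∫⁻ τ, ∫⁻ t in Ioc (0:ℝ) T, f t τ := lintegral_lintegral_swap hfmeas
  -- bound for each fixed τ
  have hslice : ∀ τ : ℝ, (∫⁻ t in Ioc (0:ℝ) T, f t τ)
      ≤ ENNReal.ofReal (T ^ β / β) * ENNReal.ofReal |g τ| := by
    intro τ
    have hbound : (∫⁻ t in Ioc (0:ℝ) T,
        (Ioc (0:ℝ) t).indicator (fun s => ENNReal.ofReal |(t - s) ^ (β - 1)|) τ)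
        ≤ ENNReal.ofReal (T ^ β / β) := by
      by_cases hτ : 0 < τ
      · have hind : ∀ t : ℝ,
            (Ioc (0:ℝ) t).indicator (fun s => ENNReal.ofReal |(t - s) ^ (β - 1)|) τ
            = (Ici τ).indicator (fun t' => ENNReal.ofReal |(t' - τ) ^ (β - 1)|) t := by
          intro t
          by_cases h : τ ≤ t
          · rw [Set.indicator_of_mem (Set.mem_Ioc.mpr ⟨hτ, h⟩),
              Set.indicator_of_mem (Set.mem_Ici.mpr h)]
          · rw [Set.indicator_of_notMem (by simp [Set.mem_Ioc, h]),
              Set.indicator_of_notMem (by simp [Set.mem_Ici, h])]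
        calc (∫⁻ t in Ioc (0:ℝ) T,
              (Ioc (0:ℝ) t).indicator (fun s => ENNReal.ofReal |(t - s) ^ (β - 1)|) τ)
            = ∫⁻ t in Ici τ ∩ Ioc (0:ℝ) T, ENNReal.ofReal |(t - τ) ^ (β - 1)| := by
              simp_rw [hind]
              rw [lintegral_indicator measurableSet_Ici,
                Measure.restrict_restrict measurableSet_Ici]
          _ ≤ ∫⁻ t in Icc τ T, ENNReal.ofReal |(t - τ) ^ (β - 1)| :=
              lintegral_mono_set (fun x hx => ⟨hx.1, hx.2.2⟩)
          _ = ∫⁻ t in Ioc τ T, ENNReal.ofReal |(t - τ) ^ (β - 1)| := by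
              rw [Measure.restrict_congr_set Ioc_ae_eq_Icc]
          _ ≤ ENNReal.ofReal (T ^ β / β) := by
              by_cases hτT : τ ≤ T
              · have habs : Set.EqOn (fun t => |(t - τ) ^ (β - 1)|)
                    (fun t => (t - τ) ^ (β - 1)) (Ioc τ T) := fun t ht =>
                  abs_of_nonneg (Real.rpow_nonneg (by linarith [ht.1]) _)
                have hii : IntervalIntegrable (fun t => (t - τ) ^ (β - 1)) volume τ T := by
                  have h0 := (intervalIntegral.intervalIntegrable_rpow'
                    (show (-1:ℝ) < β - 1 by linarith) (a := 0) (b := T - τ)).comp_sub_right τ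
                  simpa using h0
                have hio : IntegrableOn (fun t => |(t - τ) ^ (β - 1)|) (Ioc τ T) := by
                  have h2 := hii.abs
                  rwa [intervalIntegrable_iff, uIoc_of_le hτT] at h2
                rw [← ofReal_integral_eq_lintegral_ofReal hio
                  (Filter.Eventually.of_forall fun t => abs_nonneg _)]
                refine ENNReal.ofReal_le_ofReal ?_
                have hval : ∫ t in Ioc τ T, |(t - τ) ^ (β - 1)| = (T - τ) ^ β / β := by
                  rw [setIntegral_congr_fun measurableSet_Ioc habs,
                    ← intervalIntegral.integral_of_le hτT,
                    intervalIntegral.integral_comp_sub_right (fun u => u ^ (β - 1)) τ,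
                    sub_self, integral_rpow (Or.inl (by linarith : (-1:ℝ) < β - 1)),
                    show β - 1 + 1 = β from by ring, Real.zero_rpow hβ.ne']
                  ring
                rw [hval]
                exact (div_le_div_iff_of_pos_right hβ).mpr
                  (Real.rpow_le_rpow (by linarith) (by linarith) hβ.le)
              · rw [Set.Ioc_eq_empty (by linarith), Measure.restrict_empty,
                  lintegral_zero_measure]
                exact zero_le
      · have hzero : ∀ t : ℝ,
            (Ioc (0:ℝ) t).indicator (fun s => ENNReal.ofReal |(t - s) ^ (β - 1)|) τ = 0 :=
          fun t => Set.indicator_of_notMem (by simp [Set.mem_Ioc, hτ]) _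
        simp_rw [hzero]
        simp
    calc ∫⁻ t in Ioc (0:ℝ) T, f t τ
        = (∫⁻ t in Ioc (0:ℝ) T,
            (Ioc (0:ℝ) t).indicator (fun s => ENNReal.ofReal |(t - s) ^ (β - 1)|) τ)
            * ENNReal.ofReal |g τ| :=
          lintegral_mul_const' _ _ ENNReal.ofReal_ne_top
      _ ≤ ENNReal.ofReal (T ^ β / β) * ENNReal.ofReal |g τ| := mul_le_mul_left hbound _
  have hgl : ∫⁻ τ, ENNReal.ofReal |g τ| = ENNReal.ofReal (L ^ n * A) := by
    rw [← ofReal_integral_eq_lintegral_ofReal hgint.abs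
      (Filter.Eventually.of_forall fun τ => abs_nonneg _), hgabs]
  have hmain : (∫⁻ t in Ioc (0:ℝ) T,
      (‖(1 / Real.Gamma β) * ∫ τ in Ioc (0:ℝ) t, (t - τ) ^ (β - 1) * g τ‖₊ : ℝ≥0∞))
      ≤ ENNReal.ofReal (1 / Real.Gamma β * (T ^ β / β) * A * L ^ n) := by
    calc (∫⁻ t in Ioc (0:ℝ) T,
        (‖(1 / Real.Gamma β) * ∫ τ in Ioc (0:ℝ) t, (t - τ) ^ (β - 1) * g τ‖₊ : ℝ≥0∞))
        ≤ ∫⁻ t in Ioc (0:ℝ) T, ENNReal.ofReal (1 / Real.Gamma β) * ∫⁻ τ, f t τ :=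
          lintegral_mono hinner_nn
      _ = ENNReal.ofReal (1 / Real.Gamma β) * ∫⁻ t in Ioc (0:ℝ) T, ∫⁻ τ, f t τ :=
          lintegral_const_mul' _ _ ENNReal.ofReal_ne_top
      _ = ENNReal.ofReal (1 / Real.Gamma β) * ∫⁻ τ, ∫⁻ t in Ioc (0:ℝ) T, f t τ := by
          rw [hswap]
      _ ≤ ENNReal.ofReal (1 / Real.Gamma β)
            * ∫⁻ τ, ENNReal.ofReal (T ^ β / β) * ENNReal.ofReal |g τ| :=
          mul_le_mul_right (lintegral_mono hslice) _
      _ = ENNReal.ofReal (1 / Real.Gamma β)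
            * (ENNReal.ofReal (T ^ β / β) * ∫⁻ τ, ENNReal.ofReal |g τ|) := by
          rw [lintegral_const_mul' _ _ ENNReal.ofReal_ne_top]
      _ = ENNReal.ofReal (1 / Real.Gamma β * (T ^ β / β) * A * L ^ n) := by
          rw [hgl, ← ENNReal.ofReal_mul (by positivity),
            ← ENNReal.ofReal_mul (by positivity)]
          congr 1
          ring
  have hCL : (0:ℝ) ≤ 1 / Real.Gamma β * (T ^ β / β) * A * L ^ n := by positivity
  have h3 : (‖∫ t in Ioc (0:ℝ) T,
      |(1 / Real.Gamma β) * ∫ τ in Ioc (0:ℝ) t, (t - τ) ^ (β - 1) * g τ|‖₊ : ℝ≥0∞)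
      ≤ ENNReal.ofReal (1 / Real.Gamma β * (T ^ β / β) * A * L ^ n) := by
    refine (enorm_integral_le_lintegral_enorm _).trans ?_
    simp_rw [Real.enorm_abs]
    exact hmain
  rw [← enorm_eq_nnnorm, ← ofReal_norm] at h3
  have h4 : ‖∫ t in Ioc (0:ℝ) T,
      |(1 / Real.Gamma β) * ∫ τ in Ioc (0:ℝ) t, (t - τ) ^ (β - 1) * g τ|‖
      ≤ 1 / Real.Gamma β * (T ^ β / β) * A * L ^ n :=
    (ENNReal.ofReal_le_ofReal_iff hCL).mp h3
  rw [Real.norm_eq_abs] at h4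
  exact le_trans (le_abs_self _) h4
end

section
/- Let φ: ℝ → ℝ be smooth, compactly supported in [-1,1], nonnegative, with ∫_ℝ φ(x)dx = 1, and for ε ∈ (0,1) set φ_ε(x) = |log ε|·φ(x·|log ε|). Then for every real α > 0, every β ∈ ℕ, and every T > 0, there is a constant C (independent of ε) such that for all ε ∈ (0, e^{-1}): ∫_0^T | (1/Γ(α)) ∫_0^t (t-τ)^{α-1} φ_ε^{(β)}(τ) dτ | dt ≤ C·|log ε|^β. (This is the L¹ bound for the β-th derivative of the regularized fractional integral, used in the induction on derivatives.) -/
open MeasureTheory Real Set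

/-- L¹ bound for the β-th derivative of the regularized
fractional integral of order `α > 0` of the delta sequence:
`∫_0^T |(1/Γ(α)) ∫_0^t (t-τ)^{α-1} φ_ε^{(β)}(τ) dτ| dt ≤ C·|log ε|^β`. -/
theorem stmt_3
    (φ : ℝ → ℝ) (hφ : ContDiff ℝ (⊤ : ℕ∞) φ)
    (hsupp : Function.support φ ⊆ Icc (-1 : ℝ) 1)
    (hpos : ∀ x, 0 ≤ φ x)
    (hint : ∫ x, φ x = 1)
    (α : ℝ) (hα : 0 < α) (β : ℕ)
    (T : ℝ) (hT : 0 < T) :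
    ∃ C : ℝ, ∀ ε ∈ Ioo (0 : ℝ) (Real.exp (-1)),
      ∫ t in Ioc (0 : ℝ) T,
          |(1 / Real.Gamma α) *
            ∫ τ in Ioc (0 : ℝ) t,
              (t - τ) ^ (α - 1) *
                iteratedDeriv β (fun y => |Real.log ε| * φ (y * |Real.log ε|)) τ|
        ≤ C * |Real.log ε| ^ β := by
  have hφβ : ContDiff ℝ (β : ℕ∞) φ := hφ.of_le (by exact_mod_cast le_top)
  have hcont : Continuous (iteratedDeriv β φ) := hφ.continuous_iteratedDeriv β (by exact_mod_cast le_top)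
  have htsupp : tsupport φ ⊆ Icc (-1 : ℝ) 1 := closure_minimal hsupp isClosed_Icc
  have hzero : ∀ x : ℝ, x ∉ Icc (-1 : ℝ) 1 → iteratedDeriv β φ x = 0 := by
    intro x hx
    have hx' : iteratedFDeriv ℝ β φ x = 0 := by
      by_contra h
      exact hx (htsupp (support_iteratedFDeriv_subset β h))
    rw [iteratedDeriv_eq_iteratedFDeriv, hx']
    rfl
  obtain ⟨M₀, hM₀⟩ :=
    (isCompact_Icc (a := (-1 : ℝ)) (b := 1)).exists_bound_of_continuousOn hcont.continuousOn
  set M : ℝ := max M₀ 0 with hMdef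
  have hM0 : 0 ≤ M := le_max_right _ _
  have hMb : ∀ x, |iteratedDeriv β φ x| ≤ M := by
    intro x
    by_cases hx : x ∈ Icc (-1 : ℝ) 1
    · exact le_trans (by simpa using hM₀ x hx) (le_max_left _ _)
    · simp [hzero x hx, hM0]
  have hΓ : 0 < Real.Gamma α := Real.Gamma_pos_of_pos hα
  have hΓ' : 0 ≤ 1 / Real.Gamma α := le_of_lt (by rw [one_div]; exact inv_pos.mpr hΓ)
  refine ⟨1 / Real.Gamma α * (M * T ^ α / α), ?_⟩
  rintro ε ⟨hε0, hε1⟩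
  set L : ℝ := |Real.log ε| with hLdef
  have hlog : Real.log ε < -1 := by
    have h1 : Real.log ε < Real.log (Real.exp (-1)) := Real.log_lt_log hε0 hε1
    rwa [Real.log_exp] at h1
  have hL1 : (1 : ℝ) ≤ L := by
    rw [hLdef, abs_of_neg (by linarith : Real.log ε < 0)]
    linarith
  have hL0 : (0 : ℝ) < L := lt_of_lt_of_le one_pos hL1
  set δ : ℝ := L⁻¹ with hδdef
  have hδ0 : 0 < δ := inv_pos.mpr hL0
  set g : ℝ → ℝ := iteratedDeriv β (fun y => L * φ (y * L)) with hgdef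
  -- formula for g
  have hg : ∀ τ : ℝ, g τ = L ^ (β + 1) * iteratedDeriv β φ (L * τ) := by
    intro τ
    have e1 : (fun y : ℝ => L * φ (y * L)) = fun y : ℝ => (fun x => L * φ x) (L * y) := by
      funext y; rw [mul_comm y L]
    have hφc : ContDiff ℝ (β : ℕ∞) fun x : ℝ => L * φ x := contDiff_const.mul hφβ
    have e2 : ∀ z : ℝ, iteratedDeriv β (fun x : ℝ => L * φ x) z = L * iteratedDeriv β φ z := by
      intro z
      rw [← iteratedDerivWithin_univ, ← iteratedDerivWithin_univ]
      exact iteratedDerivWithin_const_mul (mem_univ z) uniqueDiffOn_univ L hφβ.contDiffWithinAt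
    rw [hgdef, e1, iteratedDeriv_comp_const_mul hφc L]
    show L ^ β * iteratedDeriv β (fun x : ℝ => L * φ x) (L * τ) = _
    rw [e2 (L * τ)]
    ring
  have hgb : ∀ τ : ℝ, |g τ| ≤ L ^ (β + 1) * M := by
    intro τ
    rw [hg τ, abs_mul, abs_of_nonneg (pow_nonneg hL0.le _)]
    exact mul_le_mul_of_nonneg_left (hMb _) (pow_nonneg hL0.le _)
  have hgz : ∀ τ : ℝ, δ < τ → g τ = 0 := by
    intro τ hτ
    have h1 : (1 : ℝ) < L * τ := by
      have := mul_lt_mul_of_pos_left hτ hL0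
      rwa [hδdef, mul_inv_cancel₀ hL0.ne'] at this
    have h2 : L * τ ∉ Icc (-1 : ℝ) 1 := fun hmem => absurd hmem.2 (not_le.mpr h1)
    rw [hg τ, hzero _ h2, mul_zero]
  -- kernel integrability
  have hker : ∀ t : ℝ, 0 < t → IntegrableOn (fun τ => (t - τ) ^ (α - 1)) (Ioc (0 : ℝ) t) := by
    intro t ht
    have h1 : IntervalIntegrable (fun u : ℝ => u ^ (α - 1)) volume 0 t :=
      intervalIntegral.intervalIntegrable_rpow' (by linarith)
    have h2 : IntervalIntegrable (fun x : ℝ => (t - x) ^ (α - 1)) volume 0 t := by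
      simpa using (h1.comp_sub_left t).symm
    rwa [intervalIntegrable_iff_integrableOn_Ioc_of_le ht.le] at h2
  -- pointwise bound
  have key : ∀ t ∈ Ioc (0 : ℝ) T,
      |(1 / Real.Gamma α) * ∫ τ in Ioc (0 : ℝ) t, (t - τ) ^ (α - 1) * g τ|
        ≤ 1 / Real.Gamma α * (M * L ^ (β + 1) / α) * (t ^ α - ((t - δ) ⊔ 0) ^ α) := by
    intro t ht
    obtain ⟨ht0, htT⟩ := ht
    set m : ℝ := min t δ with hmdef
    have hm0 : 0 < m := lt_min ht0 hδ0
    have hmt : m ≤ t := min_le_left _ _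
    have s1 : |∫ τ in Ioc (0 : ℝ) t, (t - τ) ^ (α - 1) * g τ|
        ≤ ∫ τ in Ioc (0 : ℝ) t, |(t - τ) ^ (α - 1) * g τ| := by
      simpa only [Real.norm_eq_abs] using
        norm_integral_le_integral_norm (μ := volume.restrict (Ioc (0 : ℝ) t))
          (f := fun τ => (t - τ) ^ (α - 1) * g τ)
    have hWint : IntegrableOn
        ((Iic δ).indicator fun τ => (t - τ) ^ (α - 1) * (L ^ (β + 1) * M)) (Ioc (0 : ℝ) t) :=
      ((hker t ht0).mul_const _).indicator measurableSet_Iic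
    have s2 : ∫ τ in Ioc (0 : ℝ) t, |(t - τ) ^ (α - 1) * g τ|
        ≤ ∫ τ in Ioc (0 : ℝ) t,
            (Iic δ).indicator (fun τ => (t - τ) ^ (α - 1) * (L ^ (β + 1) * M)) τ := by
      refine integral_mono_of_nonneg (Filter.Eventually.of_forall fun τ => abs_nonneg _) hWint ?_
      refine (ae_restrict_iff' measurableSet_Ioc).mpr (Filter.Eventually.of_forall fun τ hτ => ?_)
      show |(t - τ) ^ (α - 1) * g τ| ≤ _
      by_cases hτδ : τ ≤ δ
      · rw [indicator_of_mem (mem_Iic.mpr hτδ)]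
        rw [abs_mul, abs_of_nonneg (rpow_nonneg (by linarith [hτ.2] : (0 : ℝ) ≤ t - τ) _)]
        exact mul_le_mul_of_nonneg_left (hgb τ) (rpow_nonneg (by linarith [hτ.2]) _)
      · rw [indicator_of_notMem (by simpa using hτδ), hgz τ (not_le.mp hτδ), mul_zero, abs_zero]
    have s3 : ∫ τ in Ioc (0 : ℝ) t,
        (Iic δ).indicator (fun τ => (t - τ) ^ (α - 1) * (L ^ (β + 1) * M)) τ
        = ∫ τ in Ioc (0 : ℝ) m, (t - τ) ^ (α - 1) * (L ^ (β + 1) * M) := by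
      rw [setIntegral_indicator measurableSet_Iic, Ioc_inter_Iic]
    have hα1 : α - 1 + 1 = α := by ring
    have s4 : ∫ τ in Ioc (0 : ℝ) m, (t - τ) ^ (α - 1) * (L ^ (β + 1) * M)
        = (L ^ (β + 1) * M) * ((t ^ α - (t - m) ^ α) / α) := by
      rw [← intervalIntegral.integral_of_le hm0.le, intervalIntegral.integral_mul_const,
        intervalIntegral.integral_comp_sub_left (fun u : ℝ => u ^ (α - 1)) t,
        integral_rpow (Or.inl (by linarith : (-1 : ℝ) < α - 1)), hα1, sub_zero]
      ring
    have htm : t - m = (t - δ) ⊔ 0 := by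
      rw [hmdef]
      rcases le_total t δ with h | h
      · rw [min_eq_left h, sub_self, sup_eq_right.mpr (by linarith)]
      · rw [min_eq_right h, sup_eq_left.mpr (by linarith)]
    calc |(1 / Real.Gamma α) * ∫ τ in Ioc (0 : ℝ) t, (t - τ) ^ (α - 1) * g τ|
        = 1 / Real.Gamma α * |∫ τ in Ioc (0 : ℝ) t, (t - τ) ^ (α - 1) * g τ| := by
          rw [abs_mul, abs_of_nonneg hΓ']
      _ ≤ 1 / Real.Gamma α * ((L ^ (β + 1) * M) * ((t ^ α - ((t - δ) ⊔ 0) ^ α) / α)) := by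
          refine mul_le_mul_of_nonneg_left ?_ hΓ'
          rw [← htm]
          exact le_trans s1 (le_trans s2 (le_of_eq (s3.trans s4)))
      _ = 1 / Real.Gamma α * (M * L ^ (β + 1) / α) * (t ^ α - ((t - δ) ⊔ 0) ^ α) := by ring
  -- integrability of the bounding function
  have hb1 : IntegrableOn (fun t : ℝ => t ^ α) (Ioc (0 : ℝ) T) :=
    (intervalIntegral.intervalIntegrable_rpow' (by linarith : (-1 : ℝ) < α) (a := 0) (b := T)).1
  have hb2 : IntegrableOn (fun t : ℝ => ((t - δ) ⊔ 0) ^ α) (Ioc (0 : ℝ) T) := by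
    refine Integrable.mono hb1 ?_ ?_
    · exact (((continuous_id.sub continuous_const).max continuous_const).rpow_const
        (fun x => Or.inr hα.le)).aestronglyMeasurable
    · refine (ae_restrict_iff' measurableSet_Ioc).mpr (Filter.Eventually.of_forall fun t ht => ?_)
      rw [Real.norm_eq_abs, Real.norm_eq_abs,
        abs_of_nonneg (rpow_nonneg (le_max_right _ _) _),
        abs_of_nonneg (rpow_nonneg ht.1.le _)]
      exact Real.rpow_le_rpow (le_max_right _ _) (max_le (by linarith [ht.1.le]) ht.1.le) hα.le
  have hbd : IntegrableOn (fun t : ℝ => t ^ α - ((t - δ) ⊔ 0) ^ α) (Ioc (0 : ℝ) T) :=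
    hb1.sub hb2
  have hi1 : ∫ t in Ioc (0 : ℝ) T, t ^ α = T ^ (α + 1) / (α + 1) := by
    rw [← intervalIntegral.integral_of_le hT.le,
      integral_rpow (Or.inl (by linarith : (-1 : ℝ) < α)),
      Real.zero_rpow (by positivity : α + 1 ≠ 0), sub_zero]
  -- the main integral estimate for the bounding function
  have keyint : ∫ t in Ioc (0 : ℝ) T, (t ^ α - ((t - δ) ⊔ 0) ^ α) ≤ T ^ α * δ := by
    rcases le_total T δ with hc | hc
    · have h0 : 0 ≤ ∫ t in Ioc (0 : ℝ) T, ((t - δ) ⊔ 0) ^ α :=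
        setIntegral_nonneg measurableSet_Ioc fun t _ => rpow_nonneg (le_max_right _ _) _
      rw [integral_sub hb1 hb2, hi1]
      have h1 : T ^ (α + 1) / (α + 1) ≤ T ^ α * δ := by
        rw [Real.rpow_add_one hT.ne']
        calc T ^ α * T / (α + 1) ≤ T ^ α * T := by
              apply div_le_self (by positivity) (by linarith)
          _ ≤ T ^ α * δ := mul_le_mul_of_nonneg_left hc (by positivity)
      linarith
    · have hi2 : ∫ t in Ioc (0 : ℝ) T, ((t - δ) ⊔ 0) ^ α = (T - δ) ^ (α + 1) / (α + 1) := by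
        have hsplit : Ioc (0 : ℝ) δ ∪ Ioc δ T = Ioc 0 T := Ioc_union_Ioc_eq_Ioc hδ0.le hc
        rw [← hsplit, setIntegral_union (Ioc_disjoint_Ioc_of_le le_rfl) measurableSet_Ioc
          (hb2.mono_set (by rw [← hsplit]; exact subset_union_left))
          (hb2.mono_set (by rw [← hsplit]; exact subset_union_right))]
        have hz1 : ∫ t in Ioc (0 : ℝ) δ, ((t - δ) ⊔ 0) ^ α = 0 := by
          rw [setIntegral_congr_fun measurableSet_Ioc (g := fun _ => (0 : ℝ))
            (fun t ht => by
              rw [max_eq_right (by linarith [ht.2] : t - δ ≤ 0), Real.zero_rpow hα.ne'])]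
          simp
        have hz2 : ∫ t in Ioc δ T, ((t - δ) ⊔ 0) ^ α = (T - δ) ^ (α + 1) / (α + 1) := by
          rw [setIntegral_congr_fun measurableSet_Ioc (g := fun t => (t - δ) ^ α)
            (fun t ht => by rw [max_eq_left (by linarith [ht.1] : (0 : ℝ) ≤ t - δ)])]
          rw [← intervalIntegral.integral_of_le hc,
            intervalIntegral.integral_comp_sub_right (fun u : ℝ => u ^ α) δ]
          simp only [sub_self]
          rw [integral_rpow (Or.inl (by linarith : (-1 : ℝ) < α)),
            Real.zero_rpow (by positivity : α + 1 ≠ 0), sub_zero]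
        rw [hz1, hz2, zero_add]
      rw [integral_sub hb1 hb2, hi1, hi2]
      have heval : T ^ (α + 1) / (α + 1) - (T - δ) ^ (α + 1) / (α + 1)
          = ∫ x in (T - δ)..T, x ^ α := by
        rw [integral_rpow (Or.inl (by linarith : (-1 : ℝ) < α))]
        ring
      rw [heval]
      have hmono : ∫ x in (T - δ)..T, x ^ α ≤ ∫ x in (T - δ)..T, T ^ α := by
        refine intervalIntegral.integral_mono_on (by linarith)
          (intervalIntegral.intervalIntegrable_rpow' (by linarith)) intervalIntegrable_const fun x hx => ?_
        exact Real.rpow_le_rpow (by linarith [hx.1] : (0 : ℝ) ≤ x) hx.2 hα.le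
      have hconst : ∫ x in (T - δ)..T, (T : ℝ) ^ α = δ * T ^ α := by
        rw [intervalIntegral.integral_const, smul_eq_mul]
        ring
      rw [hconst] at hmono
      linarith
  -- put everything together
  calc ∫ t in Ioc (0 : ℝ) T, |(1 / Real.Gamma α) * ∫ τ in Ioc (0 : ℝ) t, (t - τ) ^ (α - 1) * g τ|
      ≤ ∫ t in Ioc (0 : ℝ) T,
          1 / Real.Gamma α * (M * L ^ (β + 1) / α) * (t ^ α - ((t - δ) ⊔ 0) ^ α) := by
        refine integral_mono_of_nonneg (Filter.Eventually.of_forall fun t => abs_nonneg _)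
          (hbd.const_mul _) ?_
        exact (ae_restrict_iff' measurableSet_Ioc).mpr
          (Filter.Eventually.of_forall fun t ht => key t ht)
    _ = 1 / Real.Gamma α * (M * L ^ (β + 1) / α)
          * ∫ t in Ioc (0 : ℝ) T, (t ^ α - ((t - δ) ⊔ 0) ^ α) := by
        rw [integral_const_mul]
    _ ≤ 1 / Real.Gamma α * (M * L ^ (β + 1) / α) * (T ^ α * δ) := by
        exact mul_le_mul_of_nonneg_left keyint (mul_nonneg hΓ' (by positivity))
    _ = 1 / Real.Gamma α * (M * T ^ α / α) * L ^ β := by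
        have hLδ : L ^ (β + 1) * δ = L ^ β := by
          rw [hδdef, pow_succ, mul_assoc, mul_inv_cancel₀ hL0.ne', mul_one]
        calc 1 / Real.Gamma α * (M * L ^ (β + 1) / α) * (T ^ α * δ)
            = 1 / Real.Gamma α * (M * T ^ α / α) * (L ^ (β + 1) * δ) := by ring
          _ = 1 / Real.Gamma α * (M * T ^ α / α) * L ^ β := by rw [hLδ]
end

section
/- Let φ: ℝ → ℝ be smooth, compactly supported in [-1,1], nonnegative, with ∫_ℝ φ(x)dx = 1, and for ε ∈ (0,1) set φ_ε(x) = |log ε|·φ(x·|log ε|). Define k: ℝ → ℝ by k(s) = log s for s > 0 and k(s) = 0 for s ≤ 0 (so that the principal value distribution vp(1/x_+) is the distributional derivative of k, and its regularization is k * φ_ε'). Then for every T > 0 there is a constant C (independent of ε) such that for all ε ∈ (0, e^{-1}): ∫_0^T | ∫_ℝ k(x-τ)·φ_ε'(τ) dτ | dx ≤ C·|log ε|. -/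
open MeasureTheory Real Set

/-- `|log|` is integrable on `(0, b]`. -/
lemma aux_log_integrable (b : ℝ) (hb : 1 ≤ b) :
    IntegrableOn (fun s => |Real.log s|) (Ioc (0:ℝ) b) := by
  have h1 : IntegrableOn (fun s => |Real.log s|) (Ioc (0:ℝ) 1) := by
    have hg : IntegrableOn (fun s : ℝ => 2 * s ^ (-2⁻¹ : ℝ)) (Ioc (0:ℝ) 1) := by
      have := (intervalIntegral.intervalIntegrable_rpow' (a := 0) (b := 1) (r := (-2⁻¹ : ℝ))
        (by norm_num)).1
      exact this.const_mul 2
    refine hg.integrable.mono' ?_ ?_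
    · exact (Real.measurable_log.abs).aestronglyMeasurable
    · rw [ae_restrict_iff' measurableSet_Ioc]
      refine Filter.Eventually.of_forall fun s hs => ?_
      have hs0 : 0 < s := hs.1
      have hs1 : s ≤ 1 := hs.2
      have hlog : Real.log s ≤ 0 := Real.log_nonpos hs0.le hs1
      have hrpow : 0 < s ^ (-2⁻¹ : ℝ) := Real.rpow_pos_of_pos hs0 _
      have key : Real.log (s ^ (-2⁻¹ : ℝ)) ≤ s ^ (-2⁻¹ : ℝ) - 1 :=
        Real.log_le_sub_one_of_pos hrpow
      rw [Real.log_rpow hs0] at key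
      have : -Real.log s ≤ 2 * s ^ (-2⁻¹ : ℝ) := by nlinarith
      simp only [Real.norm_eq_abs, abs_abs]
      rw [abs_of_nonpos hlog]
      exact this
  have h2 : IntegrableOn (fun s => |Real.log s|) (Ioc (1:ℝ) b) := by
    have hc : ContinuousOn (fun s => |Real.log s|) (Icc (1:ℝ) b) := by
      refine (Real.continuousOn_log.mono ?_).abs
      intro x hx
      simp only [mem_compl_iff, mem_singleton_iff]
      have : (1:ℝ) ≤ x := hx.1
      linarith
    exact (hc.integrableOn_Icc).mono_set Ioc_subset_Icc_self
  have hsub : Ioc (0:ℝ) b ⊆ Ioc (0:ℝ) 1 ∪ Ioc (1:ℝ) b := by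
    intro x hx
    rcases le_or_gt x 1 with h | h
    · exact Or.inl ⟨hx.1, h⟩
    · exact Or.inr ⟨h, hx.2⟩
  exact (h1.union h2).mono_set hsub

/-- The main estimate: for any continuous `ψ` supported in `[-1,1]`,
`∫_0^T |∫ k(x-τ) ψ(τ) dτ| dx ≤ C₀ ∫ |ψ|` where `C₀ = ∫_0^{T+1} |log|`. -/
lemma aux_main (T : ℝ) (hT : 0 < T) (ψ : ℝ → ℝ) (hc : Continuous ψ)
    (hs : ∀ τ, τ ∉ Icc (-1:ℝ) 1 → ψ τ = 0) :
    ∫ x in Ioc (0:ℝ) T, |∫ τ : ℝ, (if 0 < x - τ then Real.log (x - τ) else 0) * ψ τ|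
      ≤ (∫⁻ s in Ioc (0:ℝ) (T+1), ENNReal.ofReal |Real.log s|).toReal * ∫ τ, |ψ τ| := by
  classical
  set k : ℝ → ℝ := fun s => if 0 < s then Real.log s else 0 with hk
  have hkmeas : Measurable k :=
    Measurable.ite (measurableSet_lt measurable_const measurable_id)
      Real.measurable_log measurable_const
  set C0 : ENNReal := ∫⁻ s in Ioc (0:ℝ) (T+1), ENNReal.ofReal |Real.log s| with hC0
  show ∫ x in Ioc (0:ℝ) T, |∫ τ : ℝ, k (x - τ) * ψ τ| ≤ C0.toReal * ∫ τ, |ψ τ|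
  have hC0top : C0 ≠ ⊤ := by
    have hint := aux_log_integrable (T+1) (by linarith)
    have := hint.2
    rw [hasFiniteIntegral_iff_norm] at this
    refine ne_of_lt (lt_of_le_of_lt (le_of_eq ?_) this)
    refine lintegral_congr fun s => ?_
    simp [Real.norm_eq_abs, abs_abs]
  -- compact support and integrability of ψ
  have hcs : HasCompactSupport ψ := HasCompactSupport.intro isCompact_Icc hs
  have hψint : Integrable ψ := hc.integrable_of_hasCompactSupport hcs
  have hψabs_int : Integrable (fun τ => |ψ τ|) := hψint.abs
  -- measurability of the product function
  have hfmeas : Measurable fun p : ℝ × ℝ => k (p.1 - p.2) * ψ p.2 :=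
    (hkmeas.comp (measurable_fst.sub measurable_snd)).mul
      (hc.measurable.comp measurable_snd)
  have hinner_meas : AEStronglyMeasurable (fun x => ∫ τ, k (x - τ) * ψ τ)
      (volume.restrict (Ioc (0:ℝ) T)) :=
    (hfmeas.stronglyMeasurable.aestronglyMeasurable
      (μ := (volume.restrict (Ioc (0:ℝ) T)).prod volume)).integral_prod_right'
  have habs_meas : AEStronglyMeasurable (fun x => |∫ τ, k (x - τ) * ψ τ|)
      (volume.restrict (Ioc (0:ℝ) T)) := by
    simpa [Real.norm_eq_abs] using hinner_meas.norm
  -- step 1 : integral = toReal of lintegral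
  have h1 : ∫ x in Ioc (0:ℝ) T, |∫ τ, k (x - τ) * ψ τ|
      = (∫⁻ x in Ioc (0:ℝ) T, ENNReal.ofReal |∫ τ, k (x - τ) * ψ τ|).toReal := by
    rw [integral_eq_lintegral_of_nonneg_ae (Filter.Eventually.of_forall fun x => abs_nonneg _)
      habs_meas]
  -- step 2 : pointwise bound by inner lintegral
  have h2 : ∀ x : ℝ, ENNReal.ofReal |∫ τ, k (x - τ) * ψ τ|
      ≤ ∫⁻ τ, ENNReal.ofReal (|k (x - τ)| * |ψ τ|) := by
    intro x
    apply ENNReal.ofReal_le_of_le_toReal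
    simpa [Real.norm_eq_abs, abs_mul] using
      norm_integral_le_lintegral_norm (μ := (volume : Measure ℝ))
        (fun τ => k (x - τ) * ψ τ)
  -- step 3 : swap the order (Tonelli)
  have h3 : (∫⁻ x in Ioc (0:ℝ) T, ∫⁻ τ, ENNReal.ofReal (|k (x - τ)| * |ψ τ|))
      = ∫⁻ τ, ∫⁻ x in Ioc (0:ℝ) T, ENNReal.ofReal (|k (x - τ)| * |ψ τ|) := by
    apply lintegral_lintegral_swap
    exact (((hkmeas.comp (measurable_fst.sub measurable_snd)).abs.mul
      ((hc.measurable.comp measurable_snd).abs)).ennreal_ofReal).aemeasurable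
  -- step 4 : bound the inner lintegral for each τ
  have h4 : ∀ τ : ℝ, (∫⁻ x in Ioc (0:ℝ) T, ENNReal.ofReal (|k (x - τ)| * |ψ τ|))
      ≤ ENNReal.ofReal |ψ τ| * C0 := by
    intro τ
    by_cases hτ : ψ τ = 0
    · simp [hτ]
    · have hτ1 : τ ∈ Icc (-1:ℝ) 1 := by
        by_contra h; exact hτ (hs τ h)
      have step1 : (∫⁻ x in Ioc (0:ℝ) T, ENNReal.ofReal (|k (x - τ)| * |ψ τ|))
          = ENNReal.ofReal |ψ τ| * ∫⁻ x in Ioc (0:ℝ) T, ENNReal.ofReal |k (x - τ)| := by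
        rw [← lintegral_const_mul' _ _ ENNReal.ofReal_ne_top]
        refine lintegral_congr fun x => ?_
        rw [ENNReal.ofReal_mul (abs_nonneg _), mul_comm]
      rw [step1]
      refine mul_le_mul_right ?_ _
      -- change of variables x ↦ x - τ
      have hembed : MeasurableEmbedding (fun x : ℝ => x - τ) :=
        (MeasurableEquiv.subRight τ).measurableEmbedding
      have hmp : MeasurePreserving (fun x : ℝ => x - τ) volume volume :=
        measurePreserving_sub_right volume τ
      have hcv : (∫⁻ x in Ioc (0:ℝ) T, ENNReal.ofReal |k (x - τ)|)
          = ∫⁻ s in Ioc (-τ) (T - τ), ENNReal.ofReal |k s| := by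
        have heq := hmp.setLIntegral_comp_preimage_emb hembed
          (fun s => ENNReal.ofReal |k s|) (Ioc (-τ) (T - τ))
        have hset : (fun x : ℝ => x - τ) ⁻¹' Ioc (-τ) (T - τ) = Ioc (0:ℝ) T := by
          ext x
          simp only [mem_preimage, mem_Ioc]
          constructor
          · rintro ⟨a, b⟩; constructor <;> linarith
          · rintro ⟨a, b⟩; constructor <;> linarith
        rw [hset] at heq
        exact heq
      rw [hcv]
      -- bound by the integral over (0, T+1]
      calc (∫⁻ s in Ioc (-τ) (T - τ), ENNReal.ofReal |k s|)
          ≤ ∫⁻ s in Ioc (-τ) (T - τ),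
              (Ioc (0:ℝ) (T+1)).indicator (fun s => ENNReal.ofReal |k s|) s := by
            refine setLIntegral_mono
              ((hkmeas.abs.ennreal_ofReal).indicator measurableSet_Ioc) ?_
            intro s hsmem
            by_cases h0 : 0 < s
            · have hmem : s ∈ Ioc (0:ℝ) (T+1) := ⟨h0, by
                have := hsmem.2; have := hτ1.1; linarith⟩
              rw [indicator_of_mem hmem]
            · have : k s = 0 := if_neg h0
              simp [this]
        _ ≤ ∫⁻ s, (Ioc (0:ℝ) (T+1)).indicator (fun s => ENNReal.ofReal |k s|) s :=
            setLIntegral_le_lintegral _ _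
        _ = ∫⁻ s in Ioc (0:ℝ) (T+1), ENNReal.ofReal |k s| :=
            lintegral_indicator measurableSet_Ioc _
        _ = C0 := by
            refine setLIntegral_congr_fun measurableSet_Ioc
              (fun s hsmem => ?_)
            rw [hk]; simp only [if_pos hsmem.1]
  -- step 5 : integrate the bound
  have h5 : (∫⁻ τ : ℝ, ENNReal.ofReal |ψ τ| * C0)
      = ENNReal.ofReal (∫ τ, |ψ τ|) * C0 := by
    rw [lintegral_mul_const' _ _ hC0top]
    congr 1
    rw [← ofReal_integral_eq_lintegral_ofReal hψabs_int
      (Filter.Eventually.of_forall fun τ => abs_nonneg _)]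
  -- combine everything
  have hchain : (∫⁻ x in Ioc (0:ℝ) T, ENNReal.ofReal |∫ τ, k (x - τ) * ψ τ|)
      ≤ ENNReal.ofReal (∫ τ, |ψ τ|) * C0 := by
    calc (∫⁻ x in Ioc (0:ℝ) T, ENNReal.ofReal |∫ τ, k (x - τ) * ψ τ|)
        ≤ ∫⁻ x in Ioc (0:ℝ) T, ∫⁻ τ, ENNReal.ofReal (|k (x - τ)| * |ψ τ|) :=
          lintegral_mono fun x => h2 x
      _ = ∫⁻ τ, ∫⁻ x in Ioc (0:ℝ) T, ENNReal.ofReal (|k (x - τ)| * |ψ τ|) := h3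
      _ ≤ ∫⁻ τ, ENNReal.ofReal |ψ τ| * C0 := lintegral_mono fun τ => h4 τ
      _ = ENNReal.ofReal (∫ τ, |ψ τ|) * C0 := h5
  have hfin : ENNReal.ofReal (∫ τ, |ψ τ|) * C0 ≠ ⊤ :=
    ENNReal.mul_ne_top ENNReal.ofReal_ne_top hC0top
  rw [h1]
  calc (∫⁻ x in Ioc (0:ℝ) T, ENNReal.ofReal |∫ τ, k (x - τ) * ψ τ|).toReal
      ≤ (ENNReal.ofReal (∫ τ, |ψ τ|) * C0).toReal := ENNReal.toReal_mono hfin hchain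
    _ = (∫ τ, |ψ τ|) * C0.toReal := by
        rw [ENNReal.toReal_mul, ENNReal.toReal_ofReal
          (integral_nonneg fun τ => abs_nonneg _)]
    _ = C0.toReal * ∫ τ, |ψ τ| := mul_comm _ _

/-- the corollary case `α = 0`: the regularization
`k * φ_ε'` of the principal value distribution `vp(1/x₊)` (where
`k(s) = log s` for `s > 0` and `k(s) = 0` for `s ≤ 0`) is logarithmically
bounded in L¹ on `[0,T]`: `∫_0^T |∫_ℝ k(x-τ) φ_ε'(τ) dτ| dx ≤ C·|log ε|`. -/
theorem stmt_4
    (φ : ℝ → ℝ) (hφ : ContDiff ℝ (⊤ : ℕ∞) φ)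
    (hsupp : Function.support φ ⊆ Icc (-1 : ℝ) 1)
    (hpos : ∀ x, 0 ≤ φ x)
    (hint : ∫ x, φ x = 1)
    (T : ℝ) (hT : 0 < T) :
    ∃ C : ℝ, ∀ ε ∈ Ioo (0 : ℝ) (Real.exp (-1)),
      ∫ x in Ioc (0 : ℝ) T,
          |∫ τ : ℝ, (if 0 < x - τ then Real.log (x - τ) else 0) *
              deriv (fun y => |Real.log ε| * φ (y * |Real.log ε|)) τ|
        ≤ C * |Real.log ε| := by
  classical
  set A := ∫ t, |deriv φ t| with hA
  have hA0 : 0 ≤ A := integral_nonneg fun t => abs_nonneg _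
  have hφ'c : Continuous (deriv φ) := hφ.continuous_deriv (by simp)
  have htsupp : tsupport φ ⊆ Icc (-1:ℝ) 1 := closure_minimal hsupp isClosed_Icc
  have hφ'supp : ∀ y, y ∉ Icc (-1:ℝ) 1 → deriv φ y = 0 := by
    intro y hy
    by_contra h
    exact hy (htsupp (support_deriv_subset (Function.mem_support.mpr h)))
  refine ⟨(∫⁻ s in Ioc (0:ℝ) (T+1), ENNReal.ofReal |Real.log s|).toReal * A, ?_⟩
  intro ε hε
  set L := |Real.log ε| with hL
  have hεpos : 0 < ε := hε.1
  have hlogneg : Real.log ε < -1 := by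
    have := Real.log_lt_log hεpos hε.2
    rwa [Real.log_exp] at this
  have hL1 : 1 ≤ L := by
    rw [hL, abs_of_neg (by linarith)]; linarith
  have hL0 : 0 < L := lt_of_lt_of_le one_pos hL1
  -- the derivative of the mollifier
  have hd : ∀ τ : ℝ, HasDerivAt (fun y : ℝ => L * φ (y * L))
      (L * (deriv φ (τ * L) * L)) τ := by
    intro τ
    have h0 : HasDerivAt φ (deriv φ (τ * L)) (τ * L) :=
      ((hφ.differentiable (by simp)) (τ * L)).hasDerivAt
    have h1 : HasDerivAt (fun y : ℝ => y * L) L τ := hasDerivAt_mul_const L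
    exact (h0.comp τ h1).const_mul L
  have hψ_eq : ∀ τ : ℝ, deriv (fun y : ℝ => L * φ (y * L)) τ
      = L * (deriv φ (τ * L) * L) := fun τ => (hd τ).deriv
  have hψc : Continuous (deriv (fun y : ℝ => L * φ (y * L))) := by
    have : deriv (fun y : ℝ => L * φ (y * L))
        = fun τ => L * (deriv φ (τ * L) * L) := funext hψ_eq
    rw [this]
    exact continuous_const.mul ((hφ'c.comp (continuous_id.mul continuous_const)).mul
      continuous_const)
  have hψsupp : ∀ τ, τ ∉ Icc (-1:ℝ) 1 → deriv (fun y : ℝ => L * φ (y * L)) τ = 0 := by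
    intro τ hτ
    rw [hψ_eq]
    have hτL : τ * L ∉ Icc (-1:ℝ) 1 := by
      simp only [mem_Icc, not_and_or, not_le] at hτ ⊢
      rcases hτ with h | h
      · left; nlinarith
      · right; nlinarith
    rw [hφ'supp _ hτL]
    ring
  -- L¹ norm of the derivative of the mollifier
  have hψl1 : (∫ τ, |deriv (fun y : ℝ => L * φ (y * L)) τ|) = L * A := by
    have e1 : (fun τ => |deriv (fun y : ℝ => L * φ (y * L)) τ|)
        = fun τ => (L * L) * |deriv φ (τ * L)| := by
      funext τ
      rw [hψ_eq, abs_mul, abs_mul, abs_of_pos hL0]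
      ring
    rw [e1, integral_const_mul, MeasureTheory.Measure.integral_comp_mul_right
      (fun t => |deriv φ t|) L, ← hA]
    rw [smul_eq_mul, abs_of_pos (inv_pos.mpr hL0)]
    field_simp
  have hmain := aux_main T hT (deriv (fun y : ℝ => L * φ (y * L))) hψc hψsupp
  rw [hψl1] at hmain
  calc ∫ x in Ioc (0:ℝ) T,
        |∫ τ : ℝ, (if 0 < x - τ then Real.log (x - τ) else 0) *
            deriv (fun y => L * φ (y * L)) τ|
      ≤ (∫⁻ s in Ioc (0:ℝ) (T+1), ENNReal.ofReal |Real.log s|).toReal * (L * A) := hmain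
    _ = (∫⁻ s in Ioc (0:ℝ) (T+1), ENNReal.ofReal |Real.log s|).toReal * A * L := by ring
end

section
/- Let n ≥ 1 and let E_n(t,x) = (4πt)^{-n/2}·exp(-‖x‖²/(4t)) be the heat kernel on ℝⁿ. Let φ: ℝ → ℝ be smooth, compactly supported in [-1,1], nonnegative, with ∫_ℝ φ(x)dx = 1, and for ε ∈ (0, e^{-e}) set ψ_ε(τ) = (log|log ε|)·φ(τ·log|log ε|). Then for each j ∈ {1,…,n} there is a constant C > 0 (independent of ε and t) such that for all ε ∈ (0, e^{-e}) and all t > 0: ∫_{ℝⁿ} | ∫_0^t ∂_{x_j} E_n(t-τ, y)·ψ_ε(τ) dτ | dy ≤ C·(log|log ε|)^{1/2}. (This is the L¹ bound for the time-regularized gradient of the heat semigroup.) -/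
open MeasureTheory Real Set

/-- The heat kernel `E_n(t,x) = (4πt)^{-n/2} exp(-‖x‖²/(4t))` on `ℝⁿ`. -/
noncomputable def heatKernel (n : ℕ) (t : ℝ) (x : EuclideanSpace ℝ (Fin n)) : ℝ :=
  (4 * π * t) ^ (-(n : ℝ) / 2) * Real.exp (-‖x‖ ^ 2 / (4 * t))

lemma heatKernel_nonneg (n : ℕ) {s : ℝ} (hs : 0 < s) (y : EuclideanSpace ℝ (Fin n)) :
    0 ≤ heatKernel n s y := by
  unfold heatKernel
  have : (0:ℝ) < 4 * π * s := by positivity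
  positivity

lemma fderiv_heatKernel (n : ℕ) {s : ℝ} (hs : 0 < s) (y : EuclideanSpace ℝ (Fin n)) (j : Fin n) :
    fderiv ℝ (heatKernel n s) y (EuclideanSpace.single j 1)
      = -(y j) / (2 * s) * heatKernel n s y := by
  set c : ℝ := (4 * π * s) ^ (-(n : ℝ) / 2) with hc
  set r : ℝ := -(1 / (4 * s)) with hr
  have h1 : HasFDerivAt (fun x : EuclideanSpace ℝ (Fin n) => (inner ℝ x x : ℝ))
      ((fderivInnerCLM ℝ (y, y)).comp
        ((ContinuousLinearMap.id ℝ _).prod (ContinuousLinearMap.id ℝ _))) y :=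
    (hasFDerivAt_id y).inner ℝ (hasFDerivAt_id y)
  have H := ((h1.mul_const r).exp).const_mul c
  have heq : (fun x : EuclideanSpace ℝ (Fin n) => c * Real.exp ((inner ℝ x x : ℝ) * r))
      = heatKernel n s := by
    funext x
    rw [heatKernel, real_inner_self_eq_norm_sq, hc]
    congr 1
    rw [hr]; ring
  have hval : heatKernel n s y = c * Real.exp ((inner ℝ y y : ℝ) * r) := (congrFun heq y).symm
  rw [heq] at H
  rw [H.fderiv]
  simp only [ContinuousLinearMap.smul_apply, ContinuousLinearMap.comp_apply,
    ContinuousLinearMap.prod_apply, ContinuousLinearMap.id_apply, fderivInnerCLM_apply,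
    smul_eq_mul]
  have h2 : (inner ℝ y (EuclideanSpace.single j (1:ℝ)) : ℝ) = y j := by
    rw [EuclideanSpace.inner_single_right]; simp
  have h3 : (inner ℝ (EuclideanSpace.single j (1:ℝ)) y : ℝ) = y j := by
    rw [EuclideanSpace.inner_single_left]; simp
  rw [h2, h3, hval, hr]
  ring

lemma mul_exp_neg_sq_le {u c : ℝ} (hc : 0 < c) :
    u * Real.exp (-(c * u ^ 2)) ≤ (Real.sqrt c)⁻¹ := by
  have h1 : u * Real.sqrt c ≤ 1 + c * u ^ 2 := by
    nlinarith [sq_nonneg (u * Real.sqrt c - 1), Real.sq_sqrt hc.le, Real.sqrt_nonneg c]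
  have h2 : 1 + c * u ^ 2 ≤ Real.exp (c * u ^ 2) := by
    have := Real.add_one_le_exp (c * u ^ 2); linarith
  rw [Real.exp_neg, ← div_eq_mul_inv, div_le_iff₀ (Real.exp_pos _), inv_mul_eq_div,
    le_div_iff₀ (Real.sqrt_pos.mpr hc)]
  exact h1.trans h2

lemma integrable_exp_neg_mul_sq_norm' (n : ℕ) {b : ℝ} (hb : 0 < b) :
    Integrable (fun y : EuclideanSpace ℝ (Fin n) => Real.exp (-b * ‖y‖ ^ 2)) := by
  have h := (GaussianFourier.integrable_cexp_neg_mul_sq_norm_add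
    (V := EuclideanSpace ℝ (Fin n)) (b := (b : ℂ)) (by simpa using hb) 0 0).norm
  refine h.congr (Filter.Eventually.of_forall fun v => ?_)
  simp only [Complex.norm_exp]
  congr 1
  rw [Complex.add_re, Complex.mul_re]
  simp [← Complex.ofReal_pow]

lemma abs_coord_le_norm {n : ℕ} (y : EuclideanSpace ℝ (Fin n)) (j : Fin n) : |y j| ≤ ‖y‖ := by
  have h := abs_real_inner_le_norm (EuclideanSpace.single j (1:ℝ)) y
  rw [EuclideanSpace.inner_single_left, EuclideanSpace.norm_single] at h
  simpa using h

lemma gauss_lintegral_bound (n : ℕ) (j : Fin n) {s : ℝ} (hs : 0 < s) :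
    ∫⁻ y : EuclideanSpace ℝ (Fin n), ENNReal.ofReal (|y j| / (2 * s) * heatKernel n s y)
      ≤ ENNReal.ofReal (2 * 2 ^ ((n : ℝ) / 2) / Real.sqrt s) := by
  have hA : (0:ℝ) < 4 * π * s := by positivity
  have hb : (0:ℝ) < 1 / (8 * s) := by positivity
  set K : ℝ := (4 * π * s) ^ (-(n : ℝ) / 2) * Real.sqrt (8 * s) / (2 * s) with hK
  have hK0 : 0 ≤ K := by positivity
  have claim1 : ∀ y : EuclideanSpace ℝ (Fin n),
      |y j| / (2 * s) * heatKernel n s y ≤ K * Real.exp (-(1 / (8 * s)) * ‖y‖ ^ 2) := by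
    intro y
    have key : |y j| * Real.exp (-(1 / (8 * s)) * ‖y‖ ^ 2) ≤ Real.sqrt (8 * s) := by
      calc |y j| * Real.exp (-(1 / (8 * s)) * ‖y‖ ^ 2)
          ≤ ‖y‖ * Real.exp (-(1 / (8 * s)) * ‖y‖ ^ 2) := by
            exact mul_le_mul_of_nonneg_right (abs_coord_le_norm y j) (Real.exp_pos _).le
        _ ≤ (Real.sqrt (1 / (8 * s)))⁻¹ := by
            have := mul_exp_neg_sq_le (u := ‖y‖) hb
            rwa [show -(1 / (8 * s) * ‖y‖ ^ 2) = -(1 / (8 * s)) * ‖y‖ ^ 2 by ring] at this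
        _ = Real.sqrt (8 * s) := by rw [one_div, Real.sqrt_inv, inv_inv]
    have hexp : Real.exp (-‖y‖ ^ 2 / (4 * s))
        = Real.exp (-(1 / (8 * s)) * ‖y‖ ^ 2) * Real.exp (-(1 / (8 * s)) * ‖y‖ ^ 2) := by
      rw [← Real.exp_add]; congr 1; field_simp; ring
    rw [heatKernel, hexp, hK]
    have e0 := (Real.exp_pos (-(1 / (8 * s)) * ‖y‖ ^ 2)).le
    have r0 : (0:ℝ) ≤ (4 * π * s) ^ (-(n : ℝ) / 2) := by positivity
    calc |y j| / (2 * s) * ((4 * π * s) ^ (-(n : ℝ) / 2) *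
            (Real.exp (-(1 / (8 * s)) * ‖y‖ ^ 2) * Real.exp (-(1 / (8 * s)) * ‖y‖ ^ 2)))
        = (4 * π * s) ^ (-(n : ℝ) / 2) / (2 * s) *
            (|y j| * Real.exp (-(1 / (8 * s)) * ‖y‖ ^ 2)) *
            Real.exp (-(1 / (8 * s)) * ‖y‖ ^ 2) := by ring
      _ ≤ (4 * π * s) ^ (-(n : ℝ) / 2) / (2 * s) * Real.sqrt (8 * s) *
            Real.exp (-(1 / (8 * s)) * ‖y‖ ^ 2) := by
          have h1 : (0:ℝ) ≤ (4 * π * s) ^ (-(n : ℝ) / 2) / (2 * s) := by positivity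
          exact mul_le_mul_of_nonneg_right (mul_le_mul_of_nonneg_left key h1) e0
      _ = (4 * π * s) ^ (-(n : ℝ) / 2) * Real.sqrt (8 * s) / (2 * s) *
            Real.exp (-(1 / (8 * s)) * ‖y‖ ^ 2) := by ring
  have hint := integrable_exp_neg_mul_sq_norm' n hb
  have claim3 : ∫ y : EuclideanSpace ℝ (Fin n), Real.exp (-(1 / (8 * s)) * ‖y‖ ^ 2)
      = (π / (1 / (8 * s))) ^ ((n : ℝ) / 2) := by
    rw [GaussianFourier.integral_rexp_neg_mul_sq_norm hb]
    norm_num [finrank_euclideanSpace_fin]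
  calc ∫⁻ y : EuclideanSpace ℝ (Fin n), ENNReal.ofReal (|y j| / (2 * s) * heatKernel n s y)
      ≤ ∫⁻ y : EuclideanSpace ℝ (Fin n),
          ENNReal.ofReal (K * Real.exp (-(1 / (8 * s)) * ‖y‖ ^ 2)) :=
        lintegral_mono fun y => ENNReal.ofReal_le_ofReal (claim1 y)
    _ = ENNReal.ofReal (K * ((π / (1 / (8 * s))) ^ ((n : ℝ) / 2))) := by
        rw [← claim3, ← ofReal_integral_eq_lintegral_ofReal (hint.const_mul K)
          (Filter.Eventually.of_forall fun y => by positivity), integral_const_mul]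
    _ ≤ ENNReal.ofReal (2 * 2 ^ ((n : ℝ) / 2) / Real.sqrt s) := by
        apply ENNReal.ofReal_le_ofReal
        have hdiv : π / (1 / (8 * s)) = 2 * (4 * π * s) := by field_simp; ring
        rw [hdiv, Real.mul_rpow (by norm_num) hA.le, hK]
        have hcancel : (4 * π * s) ^ (-(n : ℝ) / 2) * (4 * π * s) ^ ((n : ℝ) / 2) = 1 := by
          rw [← Real.rpow_add hA, neg_div, neg_add_cancel, Real.rpow_zero]
        have hs8 : Real.sqrt (8 * s) ≤ 4 * Real.sqrt s := by
          rw [Real.sqrt_mul (by norm_num) s]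
          have : Real.sqrt 8 ≤ 4 := by
            rw [show (4:ℝ) = Real.sqrt 16 by
              rw [show (16:ℝ) = 4 ^ 2 by norm_num, Real.sqrt_sq (by norm_num)]]
            exact Real.sqrt_le_sqrt (by norm_num)
          exact mul_le_mul_of_nonneg_right this (Real.sqrt_nonneg s)
        have hss : Real.sqrt s * Real.sqrt s = s := Real.mul_self_sqrt hs.le
        have hsp : 0 < Real.sqrt s := Real.sqrt_pos.mpr hs
        rw [← hK, le_div_iff₀ hsp, hK]
        have h2n : (0:ℝ) < 2 ^ ((n : ℝ) / 2) := by positivity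
        calc (4 * π * s) ^ (-(n : ℝ) / 2) * Real.sqrt (8 * s) / (2 * s) *
              (2 ^ ((n : ℝ) / 2) * (4 * π * s) ^ ((n : ℝ) / 2)) * Real.sqrt s
            = 2 ^ ((n : ℝ) / 2) * (Real.sqrt (8 * s) * Real.sqrt s / (2 * s)) *
              ((4 * π * s) ^ (-(n : ℝ) / 2) * (4 * π * s) ^ ((n : ℝ) / 2)) := by ring
          _ = 2 ^ ((n : ℝ) / 2) * (Real.sqrt (8 * s) * Real.sqrt s / (2 * s)) := by
              rw [hcancel, mul_one]
          _ ≤ 2 * 2 ^ ((n : ℝ) / 2) := by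
              have hb2 : Real.sqrt (8 * s) * Real.sqrt s / (2 * s) ≤ 2 := by
                rw [div_le_iff₀ (by positivity)]
                nlinarith [Real.sqrt_nonneg s]
              nlinarith

set_option maxHeartbeats 1000000 in
/-- L¹ bound for the time-regularized gradient of the heat
semigroup with the slowly growing mollifier
`ψ_ε(τ) = (log|log ε|)·φ(τ·log|log ε|)`: for each coordinate `j` there is
`C > 0` with
`∫_{ℝⁿ} |∫_0^t ∂_{x_j}E_n(t-τ,y) ψ_ε(τ) dτ| dy ≤ C·(log|log ε|)^{1/2}`
for all `ε ∈ (0, e^{-e})` and all `t > 0`. -/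
theorem stmt_7 (n : ℕ) (hn : 1 ≤ n)
    (φ : ℝ → ℝ) (hφ : ContDiff ℝ (⊤ : ℕ∞) φ)
    (hsupp : Function.support φ ⊆ Icc (-1 : ℝ) 1)
    (hpos : ∀ x, 0 ≤ φ x)
    (hint : ∫ x, φ x = 1)
    (j : Fin n) :
    ∃ C > (0 : ℝ), ∀ ε ∈ Ioo (0 : ℝ) (Real.exp (-Real.exp 1)), ∀ t > (0 : ℝ),
      ∫ y : EuclideanSpace ℝ (Fin n),
          |∫ τ in Ioc (0 : ℝ) t,
              fderiv ℝ (heatKernel n (t - τ)) y (EuclideanSpace.single j 1) *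
                (Real.log |Real.log ε| * φ (τ * Real.log |Real.log ε|))|
        ≤ C * Real.log |Real.log ε| ^ ((1 : ℝ) / 2) := by
  classical
  have hφc : Continuous φ := hφ.continuous
  have hcs : HasCompactSupport φ :=
    HasCompactSupport.intro isCompact_Icc fun x hx => by
      by_contra h
      exact hx (hsupp h)
  obtain ⟨x₀, hx₀⟩ := hφc.exists_forall_ge_of_hasCompactSupport hcs
  set M : ℝ := max (φ x₀) 1 with hMdef
  have hM1 : (1:ℝ) ≤ M := le_max_right _ _
  have hMb : ∀ x, φ x ≤ M := fun x => (hx₀ x).trans (le_max_left _ _)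
  have hφint : Integrable φ := hφc.integrable_of_hasCompactSupport hcs
  set Cn : ℝ := 2 * 2 ^ ((n : ℝ) / 2) with hCndef
  have hCn : 0 < Cn := by positivity
  have hsqrt2 : (1:ℝ) ≤ Real.sqrt 2 := by
    rw [show (1:ℝ) = Real.sqrt 1 by simp]
    exact Real.sqrt_le_sqrt (by norm_num)
  refine ⟨Cn * (1 + 2 * Real.sqrt 2 * M) + 1, by positivity, ?_⟩
  set C : ℝ := Cn * (1 + 2 * Real.sqrt 2 * M) + 1 with hCdef
  intro ε hε t ht
  set L : ℝ := Real.log |Real.log ε| with hLdef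
  have hL : 1 < L := by
    have h1 : Real.log ε < -Real.exp 1 := by
      have := Real.log_lt_log hε.1 hε.2
      rwa [Real.log_exp] at this
    have h2 : Real.exp 1 < |Real.log ε| := by
      rw [abs_of_neg (by nlinarith [Real.exp_pos 1])]
      linarith
    have := Real.log_lt_log (Real.exp_pos 1) h2
    rwa [Real.log_exp] at this
  have hL0 : (0:ℝ) < L := by linarith
  have hsL1 : (1:ℝ) ≤ Real.sqrt L := by
    rw [show (1:ℝ) = Real.sqrt 1 by simp]
    exact Real.sqrt_le_sqrt hL.le
  have hsL0 : (0:ℝ) < Real.sqrt L := by linarith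
  have hssL : Real.sqrt L * Real.sqrt L = L := Real.mul_self_sqrt hL0.le
  set ψ : ℝ → ℝ := fun τ => L * φ (τ * L) with hψdef
  have hψ0 : ∀ τ, 0 ≤ ψ τ := fun τ => mul_nonneg hL0.le (hpos _)
  have hψc : Continuous ψ := continuous_const.mul (hφc.comp (continuous_id.mul continuous_const))
  have hψcs : HasCompactSupport ψ := by
    apply HasCompactSupport.intro (isCompact_Icc (a := (-1:ℝ)) (b := 1))
    intro x hx
    by_contra h
    have hφx : φ (x * L) ≠ 0 := by
      intro h0
      exact h (by rw [hψdef]; simp [h0])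
    have hmem := hsupp hφx
    have hx1 : |x * L| ≤ 1 := abs_le.mpr ⟨hmem.1, hmem.2⟩
    have : |x| ≤ 1 := by
      rw [abs_mul, abs_of_pos hL0] at hx1
      nlinarith [abs_nonneg x]
    exact hx (mem_Icc.mpr (abs_le.mp this))
  have hψint : Integrable ψ := hψc.integrable_of_hasCompactSupport hψcs
  have hψ1 : ∫ τ, ψ τ = 1 := by
    rw [hψdef]
    simp only
    rw [integral_const_mul, MeasureTheory.Measure.integral_comp_mul_right φ L, hint,
      abs_of_pos (inv_pos.mpr hL0), smul_eq_mul, mul_one, mul_inv_cancel₀ hL0.ne']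
  have hψsupp : ∀ τ, ψ τ ≠ 0 → τ ≤ 1 / L := by
    intro τ hτ
    have hφτ : φ (τ * L) ≠ 0 := fun h0 => hτ (by rw [hψdef]; simp [h0])
    have := (hsupp hφτ).2
    rw [le_div_iff₀ hL0]
    linarith
  have hψM : ∀ τ, ψ τ ≤ L * M := fun τ => mul_le_mul_of_nonneg_left (hMb _) hL0.le
  -- the explicit integrand
  set G : ℝ → EuclideanSpace ℝ (Fin n) → ℝ :=
    fun τ y => -(y j) / (2 * (t - τ)) * heatKernel n (t - τ) y * ψ τ with hGdef
  have step1 : ∀ y : EuclideanSpace ℝ (Fin n),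
      (∫ τ in Ioc (0:ℝ) t,
        fderiv ℝ (heatKernel n (t - τ)) y (EuclideanSpace.single j 1) * (L * φ (τ * L)))
      = ∫ τ in Ioo (0:ℝ) t, G τ y := by
    intro y
    rw [integral_Ioc_eq_integral_Ioo]
    refine setIntegral_congr_fun measurableSet_Ioo fun τ hτ => ?_
    rw [fderiv_heatKernel n (by simp [hτ.2] : (0:ℝ) < t - τ) y j]
  -- continuity of G on the relevant region
  set W : Set (EuclideanSpace ℝ (Fin n) × ℝ) := univ ×ˢ Ioo (0:ℝ) t with hWdef
  have hWm : MeasurableSet W := MeasurableSet.univ.prod measurableSet_Ioo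
  have hWpos : ∀ q ∈ W, (0:ℝ) < t - q.2 := by
    rintro ⟨y, τ⟩ hq
    have : τ ∈ Ioo (0:ℝ) t := hq.2
    simp [this.2]
  have hGcont : ContinuousOn (fun q : EuclideanSpace ℝ (Fin n) × ℝ => G q.2 q.1) W := by
    rw [hGdef]
    have hsubc : Continuous fun q : EuclideanSpace ℝ (Fin n) × ℝ => t - q.2 :=
      continuous_const.sub continuous_snd
    have hcoord : Continuous fun q : EuclideanSpace ℝ (Fin n) × ℝ => q.1 j :=
      (EuclideanSpace.proj j).continuous.comp continuous_fst
    have c1 : ContinuousOn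
        (fun q : EuclideanSpace ℝ (Fin n) × ℝ => -(q.1 j) / (2 * (t - q.2))) W :=
      ContinuousOn.div hcoord.neg.continuousOn (continuous_const.mul hsubc).continuousOn
        (fun q hq => by have := hWpos q hq; positivity)
    have c2 : ContinuousOn
        (fun q : EuclideanSpace ℝ (Fin n) × ℝ => (4 * π * (t - q.2)) ^ (-(n:ℝ)/2)) W := by
      intro q hq
      have h1 : (0:ℝ) < 4 * π * (t - q.2) := by have := hWpos q hq; positivity
      exact (((continuous_const.mul hsubc).continuousAt).rpow_const
        (Or.inl h1.ne')).continuousWithinAt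
    have c3 : ContinuousOn
        (fun q : EuclideanSpace ℝ (Fin n) × ℝ =>
          Real.exp (-‖q.1‖ ^ 2 / (4 * (t - q.2)))) W := by
      apply Real.continuous_exp.comp_continuousOn
      exact ContinuousOn.div ((continuous_fst.norm.pow 2).neg.continuousOn)
        (continuous_const.mul hsubc).continuousOn
        (fun q hq => by have := hWpos q hq; positivity)
    have : ContinuousOn (fun q : EuclideanSpace ℝ (Fin n) × ℝ =>
        -(q.1 j) / (2 * (t - q.2)) * heatKernel n (t - q.2) q.1 * ψ q.2) W := by
      unfold heatKernel
      exact (c1.mul (c2.mul c3)).mul ((hψc.comp continuous_snd).continuousOn)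
    exact this
  -- abbreviate measures
  set ν : Measure ℝ := volume.restrict (Ioo (0:ℝ) t) with hνdef
  have hprodmeas : (volume : Measure (EuclideanSpace ℝ (Fin n))).prod ν
      = ((volume : Measure (EuclideanSpace ℝ (Fin n))).prod volume).restrict W := by
    rw [hWdef, ← Measure.prod_restrict, Measure.restrict_univ]
  have hG_aesm : AEStronglyMeasurable (fun q : EuclideanSpace ℝ (Fin n) × ℝ => G q.2 q.1)
      ((volume : Measure (EuclideanSpace ℝ (Fin n))).prod ν) := by
    rw [hprodmeas]
    exact hGcont.aestronglyMeasurable hWm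
  have hGslice : ∀ y : EuclideanSpace ℝ (Fin n),
      AEStronglyMeasurable (fun τ => G τ y) ν := by
    intro y
    rw [hνdef]
    refine ContinuousOn.aestronglyMeasurable ?_ measurableSet_Ioo
    have hmap : MapsTo (fun τ : ℝ => (y, τ)) (Ioo (0:ℝ) t) W := fun τ hτ => by
      simp [hWdef, hτ]
    exact hGcont.comp ((continuous_const.prodMk continuous_id).continuousOn) hmap
  -- the function y ↦ ∫ τ, G τ y ∂ν  is a.e. strongly measurable
  have hF_aesm : AEStronglyMeasurable
      (fun y : EuclideanSpace ℝ (Fin n) => ∫ τ, G τ y ∂ν) volume :=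
    hG_aesm.integral_prod_right'
  -- main lintegral bound
  have key : ∫⁻ y : EuclideanSpace ℝ (Fin n), ENNReal.ofReal |∫ τ, G τ y ∂ν|
      ≤ ENNReal.ofReal (C * Real.sqrt L) := by
    have step2 : ∀ y : EuclideanSpace ℝ (Fin n),
        ENNReal.ofReal |∫ τ, G τ y ∂ν| ≤ ∫⁻ τ, ENNReal.ofReal |G τ y| ∂ν := by
      intro y
      have h1 : |∫ τ, G τ y ∂ν| ≤ ∫ τ, |G τ y| ∂ν := by
        have := norm_integral_le_integral_norm (μ := ν) (f := fun τ => G τ y)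
        simpa [Real.norm_eq_abs] using this
      have h2 : ∫ τ, |G τ y| ∂ν = (∫⁻ τ, ENNReal.ofReal |G τ y| ∂ν).toReal :=
        integral_eq_lintegral_of_nonneg_ae (Filter.Eventually.of_forall fun τ => abs_nonneg _)
          ((hGslice y).norm.congr (Filter.Eventually.of_forall fun τ =>
            Real.norm_eq_abs (G τ y)))
      calc ENNReal.ofReal |∫ τ, G τ y ∂ν| ≤ ENNReal.ofReal (∫ τ, |G τ y| ∂ν) :=
            ENNReal.ofReal_le_ofReal h1
        _ = ENNReal.ofReal ((∫⁻ τ, ENNReal.ofReal |G τ y| ∂ν).toReal) := by rw [h2]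
        _ ≤ ∫⁻ τ, ENNReal.ofReal |G τ y| ∂ν := ENNReal.ofReal_toReal_le
    have swap : ∫⁻ y : EuclideanSpace ℝ (Fin n), ∫⁻ τ, ENNReal.ofReal |G τ y| ∂ν
        = ∫⁻ τ, (∫⁻ y : EuclideanSpace ℝ (Fin n), ENNReal.ofReal |G τ y|) ∂ν := by
      apply lintegral_lintegral_swap
      exact ENNReal.measurable_ofReal.comp_aemeasurable
        (hG_aesm.norm.aemeasurable.congr (Filter.Eventually.of_forall fun q => by
          simp [Real.norm_eq_abs]))
    have inner_bound : ∀ τ ∈ Ioo (0:ℝ) t,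
        (∫⁻ y : EuclideanSpace ℝ (Fin n), ENNReal.ofReal |G τ y|)
          ≤ ENNReal.ofReal (ψ τ) * ENNReal.ofReal (Cn / Real.sqrt (t - τ)) := by
      intro τ hτ
      have hs : (0:ℝ) < t - τ := by simp [hτ.2]
      have habs : ∀ y : EuclideanSpace ℝ (Fin n),
          |G τ y| = |y j| / (2 * (t - τ)) * heatKernel n (t - τ) y * ψ τ := by
        intro y
        rw [hGdef]
        simp only
        rw [abs_mul, abs_mul, abs_of_nonneg (hψ0 τ),
          abs_of_nonneg (heatKernel_nonneg n hs y), abs_div, abs_neg,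
          abs_of_pos (by positivity : (0:ℝ) < 2 * (t - τ))]
      calc (∫⁻ y : EuclideanSpace ℝ (Fin n), ENNReal.ofReal |G τ y|)
          = ∫⁻ y : EuclideanSpace ℝ (Fin n), ENNReal.ofReal (ψ τ) *
              ENNReal.ofReal (|y j| / (2 * (t - τ)) * heatKernel n (t - τ) y) := by
            congr 1
            funext y
            rw [habs y, mul_comm _ (ψ τ), ENNReal.ofReal_mul (hψ0 τ)]
        _ = ENNReal.ofReal (ψ τ) * ∫⁻ y : EuclideanSpace ℝ (Fin n),
              ENNReal.ofReal (|y j| / (2 * (t - τ)) * heatKernel n (t - τ) y) :=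
            lintegral_const_mul' _ _ ENNReal.ofReal_ne_top
        _ ≤ ENNReal.ofReal (ψ τ) * ENNReal.ofReal (Cn / Real.sqrt (t - τ)) := by
            exact mul_le_mul_right (by rw [hCndef]; exact gauss_lintegral_bound n j hs) _
    -- the time integral bound, case split
    have time_bound : (∫⁻ τ, ENNReal.ofReal (ψ τ) * ENNReal.ofReal (Cn / Real.sqrt (t - τ)) ∂ν)
        ≤ ENNReal.ofReal ((C - 1) * Real.sqrt L) := by
      rcases le_or_gt (2 / L) t with hcase | hcase
      · -- t large
        calc (∫⁻ τ, ENNReal.ofReal (ψ τ) * ENNReal.ofReal (Cn / Real.sqrt (t - τ)) ∂ν)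
            ≤ ∫⁻ τ, ENNReal.ofReal (Cn * Real.sqrt L) * ENNReal.ofReal (ψ τ) ∂ν := by
              rw [hνdef]
              refine setLIntegral_mono' measurableSet_Ioo fun τ hτ => ?_
              by_cases hzero : ψ τ = 0
              · simp [hzero]
              · have hτ1 : τ ≤ 1 / L := hψsupp τ hzero
                have hs : (0:ℝ) < t - τ := by simp [hτ.2]
                have hsge : 1 / L ≤ t - τ := by
                  have : 2 / L ≤ t := hcase
                  have h1L : (0:ℝ) < 1 / L := by positivity
                  have : 1 / L + 1 / L ≤ t := by
                    calc 1 / L + 1 / L = 2 / L := by ring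
                    _ ≤ t := hcase
                  linarith
                have hkey : Cn / Real.sqrt (t - τ) ≤ Cn * Real.sqrt L := by
                  rw [div_le_iff₀ (Real.sqrt_pos.mpr hs)]
                  have h1 : (1:ℝ) ≤ Real.sqrt L * Real.sqrt (t - τ) := by
                    rw [← Real.sqrt_mul hL0.le]
                    rw [show (1:ℝ) = Real.sqrt 1 by simp]
                    apply Real.sqrt_le_sqrt
                    calc (1:ℝ) = L * (1 / L) := by field_simp
                    _ ≤ L * (t - τ) := by
                        exact mul_le_mul_of_nonneg_left hsge hL0.le
                  nlinarith
                rw [mul_comm (ENNReal.ofReal (ψ τ))]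
                exact mul_le_mul_left (ENNReal.ofReal_le_ofReal hkey) _
          _ = ENNReal.ofReal (Cn * Real.sqrt L) * ∫⁻ τ, ENNReal.ofReal (ψ τ) ∂ν :=
              lintegral_const_mul' _ _ ENNReal.ofReal_ne_top
          _ ≤ ENNReal.ofReal (Cn * Real.sqrt L) * ENNReal.ofReal 1 := by
              apply mul_le_mul_right
              calc (∫⁻ τ, ENNReal.ofReal (ψ τ) ∂ν)
                  ≤ ∫⁻ τ, ENNReal.ofReal (ψ τ) :=
                    setLIntegral_le_lintegral _ _
                _ = ENNReal.ofReal (∫ τ, ψ τ) :=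
                    (ofReal_integral_eq_lintegral_ofReal hψint
                      (Filter.Eventually.of_forall hψ0)).symm
                _ = ENNReal.ofReal 1 := by rw [hψ1]
          _ ≤ ENNReal.ofReal ((C - 1) * Real.sqrt L) := by
              rw [← ENNReal.ofReal_mul (by positivity), mul_one]
              apply ENNReal.ofReal_le_ofReal
              apply mul_le_mul_of_nonneg_right _ (Real.sqrt_nonneg L)
              rw [hCdef]
              nlinarith [mul_nonneg hCn.le (mul_nonneg (mul_nonneg
                (by norm_num : (0:ℝ) ≤ 2) (Real.sqrt_nonneg 2))
                (by linarith : (0:ℝ) ≤ M))]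
      · -- t small
        have hInt : IntegrableOn (fun τ => Cn / Real.sqrt (t - τ)) (Ioo (0:ℝ) t) := by
          have h1 : IntervalIntegrable (fun x : ℝ => x ^ (-(1/2) : ℝ)) volume 0 t :=
            intervalIntegral.intervalIntegrable_rpow' (by norm_num)
          have h2 : IntervalIntegrable (fun τ : ℝ => (t - τ) ^ (-(1/2) : ℝ)) volume 0 t := by
            have := (h1.comp_sub_left t).symm
            simpa using this
          have h3 : IntegrableOn (fun τ : ℝ => (t - τ) ^ (-(1/2) : ℝ)) (Ioo 0 t) := by
            rw [← integrableOn_Ioc_iff_integrableOn_Ioo]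
            exact (intervalIntegrable_iff_integrableOn_Ioc_of_le ht.le).mp h2
          refine MeasureTheory.IntegrableOn.congr_fun (h3.const_mul Cn)
            (fun τ hτ => ?_) measurableSet_Ioo
          show Cn * (t - τ) ^ (-(1/2) : ℝ) = Cn / Real.sqrt (t - τ)
          have hs : (0:ℝ) < t - τ := by simp [hτ.2]
          rw [Real.rpow_neg hs.le, Real.sqrt_eq_rpow, ← div_eq_mul_inv]
        have hval : ∫ τ in Ioo (0:ℝ) t, Cn / Real.sqrt (t - τ) = Cn * (2 * Real.sqrt t) := by
          rw [← integral_Ioc_eq_integral_Ioo,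
            ← intervalIntegral.integral_of_le ht.le]
          have hcong : ∫ τ in (0:ℝ)..t, Cn / Real.sqrt (t - τ)
              = ∫ τ in (0:ℝ)..t, Cn * (t - τ) ^ (-(1/2) : ℝ) := by
            apply intervalIntegral.integral_congr
            intro τ hτ
            rw [uIcc_of_le ht.le] at hτ
            show Cn / Real.sqrt (t - τ) = Cn * (t - τ) ^ (-(1/2) : ℝ)
            rcases eq_or_lt_of_le hτ.2 with h | h
            · rw [h]
              simp [Real.zero_rpow (by norm_num : (-(1/2):ℝ) ≠ 0)]
            · have hs : (0:ℝ) < t - τ := by linarith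
              rw [Real.rpow_neg hs.le, Real.sqrt_eq_rpow, ← div_eq_mul_inv]
          rw [hcong, intervalIntegral.integral_const_mul]
          congr 1
          rw [intervalIntegral.integral_comp_sub_left (fun x : ℝ => x ^ (-(1/2) : ℝ)) t]
          simp only [sub_zero, sub_self]
          rw [integral_rpow (Or.inl (by norm_num))]
          rw [Real.zero_rpow (by norm_num : (-(1/2):ℝ) + 1 ≠ 0), Real.sqrt_eq_rpow]
          norm_num
          ring
        calc (∫⁻ τ, ENNReal.ofReal (ψ τ) * ENNReal.ofReal (Cn / Real.sqrt (t - τ)) ∂ν)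
            ≤ ∫⁻ τ, ENNReal.ofReal (L * M) * ENNReal.ofReal (Cn / Real.sqrt (t - τ)) ∂ν := by
              rw [hνdef]
              refine setLIntegral_mono' measurableSet_Ioo fun τ hτ => ?_
              exact mul_le_mul_left (ENNReal.ofReal_le_ofReal (hψM τ)) _
          _ = ENNReal.ofReal (L * M) * ∫⁻ τ, ENNReal.ofReal (Cn / Real.sqrt (t - τ)) ∂ν :=
              lintegral_const_mul' _ _ ENNReal.ofReal_ne_top
          _ = ENNReal.ofReal (L * M) * ENNReal.ofReal (Cn * (2 * Real.sqrt t)) := by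
              rw [hνdef, ← hval, ofReal_integral_eq_lintegral_ofReal hInt
                (Filter.Eventually.of_forall fun τ => by positivity)]
          _ ≤ ENNReal.ofReal ((C - 1) * Real.sqrt L) := by
              rw [← ENNReal.ofReal_mul (by positivity)]
              apply ENNReal.ofReal_le_ofReal
              have hst : Real.sqrt t ≤ Real.sqrt 2 / Real.sqrt L := by
                rw [← Real.sqrt_div (by norm_num : (0:ℝ) ≤ 2)]
                exact Real.sqrt_le_sqrt hcase.le
              have hMpos : (0:ℝ) < M := by linarith
              calc L * M * (Cn * (2 * Real.sqrt t))
                  ≤ L * M * (Cn * (2 * (Real.sqrt 2 / Real.sqrt L))) := by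
                    apply mul_le_mul_of_nonneg_left _ (by positivity)
                    apply mul_le_mul_of_nonneg_left _ hCn.le
                    exact mul_le_mul_of_nonneg_left hst (by norm_num)
                _ = 2 * Real.sqrt 2 * M * Cn * (L / Real.sqrt L) := by ring
                _ = 2 * Real.sqrt 2 * M * Cn * Real.sqrt L := by rw [Real.div_sqrt]
                _ ≤ (C - 1) * Real.sqrt L := by
                    apply mul_le_mul_of_nonneg_right _ (Real.sqrt_nonneg L)
                    rw [hCdef]
                    nlinarith [hCn.le]
    calc ∫⁻ y : EuclideanSpace ℝ (Fin n), ENNReal.ofReal |∫ τ, G τ y ∂ν|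
        ≤ ∫⁻ y : EuclideanSpace ℝ (Fin n), ∫⁻ τ, ENNReal.ofReal |G τ y| ∂ν :=
          lintegral_mono step2
      _ = ∫⁻ τ, (∫⁻ y : EuclideanSpace ℝ (Fin n), ENNReal.ofReal |G τ y|) ∂ν := swap
      _ ≤ ∫⁻ τ, ENNReal.ofReal (ψ τ) * ENNReal.ofReal (Cn / Real.sqrt (t - τ)) ∂ν := by
          rw [hνdef]
          exact setLIntegral_mono' measurableSet_Ioo inner_bound
      _ ≤ ENNReal.ofReal ((C - 1) * Real.sqrt L) := time_bound
      _ ≤ ENNReal.ofReal (C * Real.sqrt L) := by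
          apply ENNReal.ofReal_le_ofReal
          nlinarith [Real.sqrt_nonneg L]
  -- conclude
  have hrw : (fun y : EuclideanSpace ℝ (Fin n) =>
      |∫ τ in Ioc (0 : ℝ) t,
          fderiv ℝ (heatKernel n (t - τ)) y (EuclideanSpace.single j 1) * (L * φ (τ * L))|)
      = fun y => |∫ τ, G τ y ∂ν| := by
    funext y
    rw [step1 y]
  rw [show (Real.log |Real.log ε| ^ ((1 : ℝ) / 2)) = Real.sqrt L by
    rw [Real.sqrt_eq_rpow]]
  calc ∫ y : EuclideanSpace ℝ (Fin n),
        |∫ τ in Ioc (0 : ℝ) t,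
          fderiv ℝ (heatKernel n (t - τ)) y (EuclideanSpace.single j 1) * (L * φ (τ * L))|
      = ∫ y : EuclideanSpace ℝ (Fin n), |∫ τ, G τ y ∂ν| := by rw [hrw]
    _ = (∫⁻ y : EuclideanSpace ℝ (Fin n), ENNReal.ofReal |∫ τ, G τ y ∂ν|).toReal :=
        integral_eq_lintegral_of_nonneg_ae (Filter.Eventually.of_forall fun y => abs_nonneg _)
          (hF_aesm.norm.congr (Filter.Eventually.of_forall fun y =>
            Real.norm_eq_abs _))
    _ ≤ C * Real.sqrt L :=
        ENNReal.toReal_le_of_le_ofReal (by positivity) key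
end

section
/- Let A > 0, n ≥ 1, let g: [0,A] → ℝⁿ be continuous, and let k: [0,A] × [0,A] × ℝⁿ → ℝⁿ be continuous and satisfy the uniform Lipschitz condition ‖k(x,y,u) - k(x,y,v)‖ ≤ M·‖u - v‖ for all x, y ∈ [0,A] and u, v ∈ ℝⁿ, for some M ≥ 0. Then there exists a unique continuous function f: [0,A] → ℝⁿ such that f(x) = g(x) + ∫_0^x k(x, y, f(y)) dy for all x ∈ [0,A]. -/
/-!
The solutions are exactly the fixed points of the Volterra operator
`T F x = g x + ∫₀ˣ k(x, y, F y) dy` on the Banach space `C([0, A], ℝⁿ)`. By induction, the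
Lipschitz bound `M` on the kernel gives `‖Tᵐ F₁ x - Tᵐ F₂ x‖ ≤ (M x)ᵐ / m! · ‖F₁ - F₂‖`, so some
iterate `Tᵐ` is a contraction and `T` has exactly one fixed point.
-/

open MeasureTheory Set Function NNReal

namespace Volterra

variable {E : Type*} [NormedAddCommGroup E] {A : ℝ} (hA : 0 ≤ A) {k : ℝ → ℝ → E → E}
  (hk : ContinuousOn (fun q : ℝ × ℝ × E => k q.1 q.2.1 q.2.2) (Icc 0 A ×ˢ Icc 0 A ×ˢ univ))

include hk in
theorem continuous_kernel_projIcc (F : C(Icc 0 A, E)) :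
    Continuous fun p : Icc 0 A × ℝ =>
      k p.1 (projIcc 0 A hA p.2) (F (projIcc 0 A hA p.2)) :=
  hk.comp_continuous
    (f := fun p : Icc 0 A × ℝ => ((p.1 : ℝ), (projIcc 0 A hA p.2 : ℝ), F (projIcc 0 A hA p.2)))
    (by fun_prop) fun p => ⟨p.1.2, (projIcc 0 A hA p.2).2, mem_univ _⟩

variable [NormedSpace ℝ E] {g : ℝ → E} (hg : ContinuousOn g (Icc 0 A))

/-- The integration variable is clamped to `[0, A]`, which changes nothing on `[0, x]` but makes
the integrand jointly continuous on `[0, A] × ℝ`. -/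
noncomputable def volterraOp (F : C(Icc 0 A, E)) : C(Icc 0 A, E) where
  toFun x := g x + ∫ y in (0 : ℝ)..x, k x (projIcc 0 A hA y) (F (projIcc 0 A hA y))
  continuous_toFun := hg.domRestrict.add <|
    intervalIntegral.continuous_parametric_intervalIntegral_of_continuous
      (f := fun (x : Icc 0 A) y => k x (projIcc 0 A hA y) (F (projIcc 0 A hA y)))
      (continuous_kernel_projIcc hA hk F) continuous_subtype_val

theorem volterraOp_apply (F : C(Icc 0 A, E)) (x : Icc 0 A) :
    volterraOp hA hk hg F x =
      g x + ∫ y in (0 : ℝ)..x, k x (projIcc 0 A hA y) (F (projIcc 0 A hA y)) :=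
  rfl

theorem isFixedPt_volterraOp_iff {F : C(Icc 0 A, E)} {f : ℝ → E} (hfF : ∀ x, F x = f x) :
    IsFixedPt (volterraOp hA hk hg) F ↔
      ∀ x ∈ Icc 0 A, f x = g x + ∫ y in Ioc 0 x, k x y (f y) := by
  have hint : ∀ x ∈ Icc 0 A,
      ∫ y in (0 : ℝ)..x, k x (projIcc 0 A hA y) (F (projIcc 0 A hA y)) =
        ∫ y in Ioc 0 x, k x y (f y) := by
    intro x hx
    rw [intervalIntegral.integral_of_le hx.1]
    refine setIntegral_congr_fun measurableSet_Ioc fun y hy => ?_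
    have hyI : y ∈ Icc 0 A := ⟨hy.1.le, hy.2.trans hx.2⟩
    simp only [hfF, projIcc_of_mem hA hyI]
  rw [IsFixedPt, ContinuousMap.ext_iff, Subtype.forall]
  refine forall₂_congr fun x hx => ?_
  rw [volterraOp_apply, hfF, hint x hx, eq_comm]

variable {K : ℝ≥0} (hK : ∀ x ∈ Icc 0 A, ∀ y ∈ Icc 0 A, LipschitzWith K (k x y))

include hK in
theorem norm_volterraOp_sub_le {F₁ F₂ : C(Icc 0 A, E)} {C : ℝ} (m : ℕ)
    (hF : ∀ y : Icc 0 A, ‖F₁ y - F₂ y‖ ≤ C * (y : ℝ) ^ m) (x : Icc 0 A) :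
    ‖volterraOp hA hk hg F₁ x - volterraOp hA hk hg F₂ x‖ ≤
      K * C * (x : ℝ) ^ (m + 1) / (m + 1) := by
  have hint : ∀ F : C(Icc 0 A, E), IntervalIntegrable
      (fun y => k x (projIcc 0 A hA y) (F (projIcc 0 A hA y))) volume 0 x := fun F =>
    ((continuous_kernel_projIcc hA hk F).comp (Continuous.prodMk_right x)).intervalIntegrable _ _
  have hbound : ∀ y ∈ Ioc (0 : ℝ) x,
      ‖k x (projIcc 0 A hA y) (F₁ (projIcc 0 A hA y)) -
        k x (projIcc 0 A hA y) (F₂ (projIcc 0 A hA y))‖ ≤ K * C * y ^ m := by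
    intro y hy
    have hyI : y ∈ Icc 0 A := ⟨hy.1.le, hy.2.trans x.2.2⟩
    rw [← dist_eq_norm, mul_assoc]
    refine ((hK x x.2 _ (projIcc 0 A hA y).2).dist_le_mul _ _).trans ?_
    gcongr
    simpa only [dist_eq_norm, projIcc_of_mem hA hyI] using hF ⟨y, hyI⟩
  calc ‖volterraOp hA hk hg F₁ x - volterraOp hA hk hg F₂ x‖
      = ‖∫ y in (0 : ℝ)..x, (k x (projIcc 0 A hA y) (F₁ (projIcc 0 A hA y)) -
          k x (projIcc 0 A hA y) (F₂ (projIcc 0 A hA y)))‖ := by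
        rw [volterraOp_apply, volterraOp_apply, add_sub_add_left_eq_sub,
          intervalIntegral.integral_sub (hint F₁) (hint F₂)]
    _ ≤ ∫ y in (0 : ℝ)..x, K * C * y ^ m :=
        intervalIntegral.norm_integral_le_of_norm_le x.2.1 (ae_of_all _ hbound)
          (Continuous.intervalIntegrable (by fun_prop) _ _)
    _ = K * C * (x : ℝ) ^ (m + 1) / (m + 1) := by
        rw [intervalIntegral.integral_const_mul, integral_pow]
        ring

include hK in
theorem norm_iterate_volterraOp_sub_le (F₁ F₂ : C(Icc 0 A, E)) (m : ℕ) (x : Icc 0 A) :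
    ‖(volterraOp hA hk hg)^[m] F₁ x - (volterraOp hA hk hg)^[m] F₂ x‖ ≤
      K ^ m * dist F₁ F₂ / m.factorial * (x : ℝ) ^ m := by
  induction m generalizing x with
  | zero =>
    simpa [← dist_eq_norm] using ContinuousMap.dist_apply_le_dist x
  | succ m ih =>
    rw [iterate_succ_apply', iterate_succ_apply']
    refine (norm_volterraOp_sub_le hA hk hg hK m ih x).trans_eq ?_
    rw [Nat.factorial_succ]
    push_cast
    field_simp
    ring

include hK in
theorem exists_contractingWith_iterate_volterraOp :
    ∃ (m : ℕ) (c : ℝ≥0), ContractingWith c (volterraOp hA hk hg)^[m] := by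
  obtain ⟨m, hm⟩ := ((FloorSemiring.tendsto_pow_div_factorial_atTop ((K : ℝ) * A)).eventually
    (gt_mem_nhds one_pos)).exists
  refine ⟨m, ((K * A) ^ m / m.factorial).toNNReal, by simpa using hm,
    LipschitzWith.of_dist_le' fun F₁ F₂ => ?_⟩
  refine (ContinuousMap.dist_le (by positivity)).2 fun x => ?_
  rw [dist_eq_norm]
  calc _ ≤ K ^ m * dist F₁ F₂ / m.factorial * (x : ℝ) ^ m :=
        norm_iterate_volterraOp_sub_le hA hk hg hK F₁ F₂ m x
    _ ≤ K ^ m * dist F₁ F₂ / m.factorial * A ^ m := by gcongr; exacts [x.2.1, x.2.2]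
    _ = (K * A) ^ m / m.factorial * dist F₁ F₂ := by ring

include hK in
theorem existsUnique_isFixedPt_volterraOp [CompleteSpace E] :
    ∃! F, IsFixedPt (volterraOp hA hk hg) F := by
  have : Nonempty (Icc 0 A) := ⟨⟨0, left_mem_Icc.2 hA⟩⟩
  obtain ⟨m, c, hc⟩ := exists_contractingWith_iterate_volterraOp hA hk hg hK
  exact ⟨_, hc.isFixedPt_fixedPoint_iterate, fun F hF =>
    hc.fixedPoint_unique' (hF.iterate m) hc.fixedPoint_isFixedPt⟩

end Volterra

open Volterra

theorem stmt_14_general (A : ℝ) (hA : 0 < A) (n : ℕ)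
    (g : ℝ → EuclideanSpace ℝ (Fin n)) (hg : ContinuousOn g (Icc 0 A))
    (k : ℝ → ℝ → EuclideanSpace ℝ (Fin n) → EuclideanSpace ℝ (Fin n))
    (hk : ContinuousOn
      (fun q : ℝ × ℝ × EuclideanSpace ℝ (Fin n) => k q.1 q.2.1 q.2.2)
      (Icc 0 A ×ˢ Icc 0 A ×ˢ univ))
    (M : ℝ)
    (hlip : ∀ x ∈ Icc (0 : ℝ) A, ∀ y ∈ Icc (0 : ℝ) A,
      ∀ u v : EuclideanSpace ℝ (Fin n), ‖k x y u - k x y v‖ ≤ M * ‖u - v‖) :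
    (∃ f : ℝ → EuclideanSpace ℝ (Fin n),
        ContinuousOn f (Icc 0 A) ∧
        ∀ x ∈ Icc (0 : ℝ) A, f x = g x + ∫ y in Ioc (0 : ℝ) x, k x y (f y)) ∧
    (∀ f₁ f₂ : ℝ → EuclideanSpace ℝ (Fin n),
        ContinuousOn f₁ (Icc 0 A) → ContinuousOn f₂ (Icc 0 A) →
        (∀ x ∈ Icc (0 : ℝ) A, f₁ x = g x + ∫ y in Ioc (0 : ℝ) x, k x y (f₁ y)) →
        (∀ x ∈ Icc (0 : ℝ) A, f₂ x = g x + ∫ y in Ioc (0 : ℝ) x, k x y (f₂ y)) →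
        ∀ x ∈ Icc (0 : ℝ) A, f₁ x = f₂ x) := by
  have hK : ∀ x ∈ Icc 0 A, ∀ y ∈ Icc 0 A, LipschitzWith M.toNNReal (k x y) :=
    fun x hx y hy => LipschitzWith.of_dist_le' fun u v => by
      simpa only [dist_eq_norm] using hlip x hx y hy u v
  obtain ⟨F, hF, hF_unique⟩ := existsUnique_isFixedPt_volterraOp hA.le hk hg hK
  refine ⟨⟨IccExtend hA.le F, F.continuous.Icc_extend'.continuousOn,
    (isFixedPt_volterraOp_iff hA.le hk hg fun x => (IccExtend_val _ _ x).symm).1 hF⟩, ?_⟩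
  intro f₁ f₂ hf₁ hf₂ h₁ h₂ x hx
  have hF₁ := hF_unique ⟨_, hf₁.domRestrict⟩
    ((isFixedPt_volterraOp_iff hA.le hk hg fun _ => rfl).2 h₁)
  have hF₂ := hF_unique ⟨_, hf₂.domRestrict⟩
    ((isFixedPt_volterraOp_iff hA.le hk hg fun _ => rfl).2 h₂)
  exact congrArg (fun G : C(Icc 0 A, _) => G ⟨x, hx⟩) (hF₁.trans hF₂.symm)

/-- existence and uniqueness of a continuous solution
`f : [0,A] → ℝⁿ` of the Volterra integral equation
`f(x) = g(x) + ∫_0^x k(x,y,f(y)) dy` with continuous free term `g`,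
continuous kernel `k`, and a uniform Lipschitz condition in the unknown. -/
theorem stmt_14 (A : ℝ) (hA : 0 < A) (n : ℕ) (hn : 1 ≤ n)
    (g : ℝ → EuclideanSpace ℝ (Fin n)) (hg : ContinuousOn g (Icc 0 A))
    (k : ℝ → ℝ → EuclideanSpace ℝ (Fin n) → EuclideanSpace ℝ (Fin n))
    (hk : ContinuousOn
      (fun q : ℝ × ℝ × EuclideanSpace ℝ (Fin n) => k q.1 q.2.1 q.2.2)
      (Icc 0 A ×ˢ Icc 0 A ×ˢ univ))
    (M : ℝ) (hM : 0 ≤ M)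
    (hlip : ∀ x ∈ Icc (0 : ℝ) A, ∀ y ∈ Icc (0 : ℝ) A,
      ∀ u v : EuclideanSpace ℝ (Fin n), ‖k x y u - k x y v‖ ≤ M * ‖u - v‖) :
    (∃ f : ℝ → EuclideanSpace ℝ (Fin n),
        ContinuousOn f (Icc 0 A) ∧
        ∀ x ∈ Icc (0 : ℝ) A, f x = g x + ∫ y in Ioc (0 : ℝ) x, k x y (f y)) ∧
    (∀ f₁ f₂ : ℝ → EuclideanSpace ℝ (Fin n),
        ContinuousOn f₁ (Icc 0 A) → ContinuousOn f₂ (Icc 0 A) →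
        (∀ x ∈ Icc (0 : ℝ) A, f₁ x = g x + ∫ y in Ioc (0 : ℝ) x, k x y (f₁ y)) →
        (∀ x ∈ Icc (0 : ℝ) A, f₂ x = g x + ∫ y in Ioc (0 : ℝ) x, k x y (f₂ y)) →
        ∀ x ∈ Icc (0 : ℝ) A, f₁ x = f₂ x) :=
  stmt_14_general A hA n g hg k hk M hlip
end

section
/- Let A > 0, n ≥ 1, b ≥ 0, m ≥ 0 with b + m ≤ 1, and C₀, C₁, C₂ > 0. Let ε ∈ (0, e^{-1}). Suppose: g: [0,A] → ℝⁿ is continuous with sup_{x∈[0,A]} ‖g(x)‖ ≤ C₀·|log ε|; k: [0,A] × [0,A] × ℝⁿ → ℝⁿ satisfies k(x,y,0) = 0 and ‖k(x,y,u) - k(x,y,v)‖ ≤ C₁·|log ε|^b·‖u-v‖ for all x,y,u,v; h: [0,A] × [0,A] → ℝ is measurable with |h(x,y)| ≤ C₂·|log ε|^m. If f: [0,A] → ℝⁿ is continuous and satisfies f(x) = g(x) + ∫_0^x h(x,y)·k(x, y, f(y)) dy for all x ∈ [0,A], then sup_{x∈[0,A]} ‖f(x)‖ ≤ C₀·|log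 ε|·exp(C₁·C₂·|log ε|^{b+m}·A); in particular there exist C > 0 and N ∈ ℕ, depending only on A, C₀, C₁, C₂ (not on ε), such that sup_{x∈[0,A]} ‖f(x)‖ ≤ C·ε^{-N}. -/
/-!
Since `‖h x y • k x y u‖ ≤ K ‖u‖` with `K = C₁C₂|log ε|^(b+m)`, the integral equation gives the
linear integral inequality `‖f x‖ ≤ C₀|log ε| + K ∫₀ˣ ‖f‖`, and Grönwall's inequality for the
primitive `x ↦ ∫₀ˣ ‖f‖` yields `‖f x‖ ≤ C₀|log ε| e^{K x}`. As `b + m ≤ 1` and `|log ε| > 1`, the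
exponent is at most `C₁C₂A|log ε|`; with `|log ε| ≤ e^{|log ε|}` the bound is at most
`C₀ e^{N|log ε|} = C₀ ε^{-N}` for any integer `N ≥ 1 + C₁C₂A`.
-/

open MeasureTheory Real Set

/-- Hypotheses of the moderateness estimate for the regularized system of
Volterra integral equations with polar kernel: `g` is the (logarithmically
bounded) regularized free term, `k` the cut-off kernel with Lipschitz
constant `C₁|log ε|^b` vanishing at `0`, `h` the regularized polar-kernel
factor bounded by `C₂|log ε|^m`, and `f` a continuous solution of
`f(x) = g(x) + ∫_0^x h(x,y)·k(x,y,f(y)) dy` on `[0,A]`. -/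
def VolterraHyp {n : ℕ} (A b m C₀ C₁ C₂ ε : ℝ)
    (g : ℝ → EuclideanSpace ℝ (Fin n))
    (k : ℝ → ℝ → EuclideanSpace ℝ (Fin n) → EuclideanSpace ℝ (Fin n))
    (h : ℝ → ℝ → ℝ)
    (f : ℝ → EuclideanSpace ℝ (Fin n)) : Prop :=
  ContinuousOn g (Icc 0 A) ∧
  (∀ x ∈ Icc (0 : ℝ) A, ‖g x‖ ≤ C₀ * |Real.log ε|) ∧
  (∀ x y : ℝ, k x y 0 = 0) ∧
  (∀ (x y : ℝ) (u v : EuclideanSpace ℝ (Fin n)),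
    ‖k x y u - k x y v‖ ≤ C₁ * |Real.log ε| ^ b * ‖u - v‖) ∧
  Measurable (Function.uncurry h) ∧
  (∀ x y : ℝ, |h x y| ≤ C₂ * |Real.log ε| ^ m) ∧
  ContinuousOn f (Icc 0 A) ∧
  (∀ x ∈ Icc (0 : ℝ) A, f x = g x + ∫ y in Ioc (0 : ℝ) x, h x y • k x y (f y))

lemma add_mul_gronwallBound_zero (c K t : ℝ) :
    c + K * gronwallBound 0 K c t = c * exp (K * t) := by
  rcases eq_or_ne K 0 with rfl | hK
  · simp
  · rw [gronwallBound_of_K_ne_0 hK]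
    field_simp
    ring

theorem le_mul_exp_of_le_add_mul_integral {u : ℝ → ℝ} {a b c K : ℝ} (hK : 0 ≤ K)
    (hu : ContinuousOn u (Icc a b)) (h : ∀ x ∈ Icc a b, u x ≤ c + K * ∫ y in a..x, u y) :
    ∀ x ∈ Icc a b, u x ≤ c * exp (K * (x - a)) := by
  intro x hx
  have hderiv : ∀ t ∈ Icc a b,
      HasDerivWithinAt (fun s => ∫ y in a..s, u y) (u t) (Icc a b) t := by
    intro t ht
    have : Fact (t ∈ Icc a b) := ⟨ht⟩
    exact intervalIntegral.integral_hasDerivWithinAt_right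
      ((hu.mono (uIcc_subset_Icc (left_mem_Icc.2 (ht.1.trans ht.2)) ht)).intervalIntegrable)
      (hu.stronglyMeasurableAtFilter_nhdsWithin measurableSet_Icc t) (hu t ht)
  have hprimitive : (∫ y in a..x, u y) ≤ gronwallBound 0 K c (x - a) :=
    le_gronwallBound_of_liminf_deriv_right_le (f' := u)
      (fun t ht => (hderiv t ht).continuousWithinAt)
      (fun t ht _ hr => ((hderiv t (Ico_subset_Icc_self ht)).mono_of_mem_nhdsWithin
        (Icc_mem_nhdsGE_of_mem ht)).liminf_right_slope_le hr)
      (by simp) (fun t ht => (h t (Ico_subset_Icc_self ht)).trans_eq (add_comm _ _)) x hx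
  calc u x ≤ c + K * ∫ y in a..x, u y := h x hx
    _ ≤ c + K * gronwallBound 0 K c (x - a) := by gcongr
    _ = c * exp (K * (x - a)) := add_mul_gronwallBound_zero c K (x - a)

theorem norm_le_add_mul_integral_of_eq_add_integral {E : Type*} [NormedAddCommGroup E]
    [NormedSpace ℝ E] {f g : ℝ → E} {k : ℝ → ℝ → E → E} {h : ℝ → ℝ → ℝ} {x G H M : ℝ}
    (hx : 0 ≤ x) (hf : ContinuousOn f (Icc 0 x)) (hg : ‖g x‖ ≤ G)
    (hh : ∀ y, |h x y| ≤ H) (hk : ∀ y u, ‖k x y u‖ ≤ M * ‖u‖)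
    (heq : f x = g x + ∫ y in Ioc 0 x, h x y • k x y (f y)) :
    ‖f x‖ ≤ G + H * M * ∫ y in 0..x, ‖f y‖ := by
  have hint : IntegrableOn (fun y => H * M * ‖f y‖) (Ioc 0 x) :=
    (continuousOn_const.mul hf.norm).integrableOn_Icc.mono_set Ioc_subset_Icc_self
  have hterm : ∀ y, ‖h x y • k x y (f y)‖ ≤ H * M * ‖f y‖ := fun y => by
    rw [norm_smul, Real.norm_eq_abs, mul_assoc]
    exact mul_le_mul (hh y) (hk y (f y)) (norm_nonneg _) ((abs_nonneg _).trans (hh y))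
  calc ‖f x‖ ≤ ‖g x‖ + ‖∫ y in Ioc 0 x, h x y • k x y (f y)‖ := heq ▸ norm_add_le _ _
    _ ≤ G + ∫ y in Ioc 0 x, H * M * ‖f y‖ := by
      gcongr
      exact norm_integral_le_of_norm_le hint (Filter.Eventually.of_forall hterm)
    _ = G + H * M * ∫ y in 0..x, ‖f y‖ := by
      rw [intervalIntegral.integral_of_le hx, integral_const_mul]

theorem VolterraHyp.norm_le_mul_exp {n : ℕ} {A b m C₀ C₁ C₂ ε : ℝ}
    {g : ℝ → EuclideanSpace ℝ (Fin n)}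
    {k : ℝ → ℝ → EuclideanSpace ℝ (Fin n) → EuclideanSpace ℝ (Fin n)}
    {h : ℝ → ℝ → ℝ} {f : ℝ → EuclideanSpace ℝ (Fin n)}
    (H : VolterraHyp A b m C₀ C₁ C₂ ε g k h f) (hC₁ : 0 ≤ C₁) (hC₂ : 0 ≤ C₂)
    (hε : 0 < |log ε|) :
    ∀ x ∈ Icc 0 A, ‖f x‖ ≤ C₀ * |log ε| * exp (C₁ * C₂ * |log ε| ^ (b + m) * x) := by
  obtain ⟨-, hg, hk0, hkL, -, hh, hf, heq⟩ := H
  have hk : ∀ x y u, ‖k x y u‖ ≤ C₁ * |log ε| ^ b * ‖u‖ := fun x y u => by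
    simpa [hk0] using hkL x y u 0
  have hK : C₂ * |log ε| ^ m * (C₁ * |log ε| ^ b) = C₁ * C₂ * |log ε| ^ (b + m) := by
    rw [rpow_add hε]
    ring
  simpa using le_mul_exp_of_le_add_mul_integral (u := fun x => ‖f x‖) (by positivity) hf.norm
    fun x hx => hK ▸ norm_le_add_mul_integral_of_eq_add_integral hx.1
      (hf.mono (Icc_subset_Icc_right hx.2)) (hg x hx) (hh x) (hk x) (heq x hx)

lemma one_lt_abs_log_of_mem_Ioo {ε : ℝ} (hε : ε ∈ Ioo 0 (exp (-1))) : 1 < |log ε| := by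
  have := log_lt_log hε.1 hε.2
  rw [log_exp] at this
  exact lt_abs.2 (Or.inr (by linarith))

lemma exp_mul_abs_log_eq_rpow_neg {ε : ℝ} (c : ℝ) (hε₀ : 0 < ε) (hε₁ : ε < 1) :
    exp (c * |log ε|) = ε ^ (-c) := by
  rw [abs_of_neg (log_neg hε₀ hε₁), rpow_def_of_pos hε₀]
  ring_nf

lemma mul_exp_mul_rpow_le_exp {L c s : ℝ} (hL : 1 ≤ L) (hc : 0 ≤ c) (hs : s ≤ 1) :
    L * exp (c * L ^ s) ≤ exp ((1 + c) * L) :=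
  calc L * exp (c * L ^ s) ≤ exp L * exp (c * L) := by
        gcongr
        · linarith [add_one_le_exp L]
        · exact rpow_le_self_of_one_le hL hs
    _ = exp ((1 + c) * L) := by rw [← exp_add]; ring_nf

theorem stmt_15_general (A : ℝ) (n : ℕ)
    (b m : ℝ) (hbm : b + m ≤ 1)
    (C₀ C₁ C₂ : ℝ) (hC₀ : 0 < C₀) (hC₁ : 0 < C₁) (hC₂ : 0 < C₂) :
    (∀ ε ∈ Ioo (0 : ℝ) (Real.exp (-1)),
      ∀ (g : ℝ → EuclideanSpace ℝ (Fin n))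
        (k : ℝ → ℝ → EuclideanSpace ℝ (Fin n) → EuclideanSpace ℝ (Fin n))
        (h : ℝ → ℝ → ℝ) (f : ℝ → EuclideanSpace ℝ (Fin n)),
        VolterraHyp A b m C₀ C₁ C₂ ε g k h f →
        ∀ x ∈ Icc (0 : ℝ) A,
          ‖f x‖ ≤ C₀ * |Real.log ε| *
            Real.exp (C₁ * C₂ * |Real.log ε| ^ (b + m) * A)) ∧
    ∃ C > (0 : ℝ), ∃ N : ℕ, ∀ ε ∈ Ioo (0 : ℝ) (Real.exp (-1)),
      ∀ (g : ℝ → EuclideanSpace ℝ (Fin n))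
        (k : ℝ → ℝ → EuclideanSpace ℝ (Fin n) → EuclideanSpace ℝ (Fin n))
        (h : ℝ → ℝ → ℝ) (f : ℝ → EuclideanSpace ℝ (Fin n)),
        VolterraHyp A b m C₀ C₁ C₂ ε g k h f →
        ∀ x ∈ Icc (0 : ℝ) A, ‖f x‖ ≤ C * ε ^ (-(N : ℝ)) := by
  have bound : ∀ ε ∈ Ioo (0 : ℝ) (exp (-1)), ∀ g k h f,
      VolterraHyp (n := n) A b m C₀ C₁ C₂ ε g k h f → ∀ x ∈ Icc (0 : ℝ) A,
        ‖f x‖ ≤ C₀ * |log ε| * exp (C₁ * C₂ * |log ε| ^ (b + m) * A) := by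
    intro ε hε g k h f H x hx
    have hL := one_lt_abs_log_of_mem_Ioo hε
    refine (H.norm_le_mul_exp hC₁.le hC₂.le (by linarith) x hx).trans ?_
    gcongr
    exact hx.2
  refine ⟨bound, C₀, hC₀, ⌈1 + C₁ * C₂ * A⌉₊, fun ε hε g k h f H x hx => ?_⟩
  have hL := one_lt_abs_log_of_mem_Ioo hε
  have hA : 0 ≤ A := hx.1.trans hx.2
  calc ‖f x‖ ≤ C₀ * (|log ε| * exp (C₁ * C₂ * A * |log ε| ^ (b + m))) :=
        (bound ε hε g k h f H x hx).trans_eq (by ring_nf)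
    _ ≤ C₀ * exp ((1 + C₁ * C₂ * A) * |log ε|) := by
        gcongr
        exact mul_exp_mul_rpow_le_exp hL.le (by positivity) hbm
    _ ≤ C₀ * exp (⌈1 + C₁ * C₂ * A⌉₊ * |log ε|) := by
        gcongr
        exact Nat.le_ceil _
    _ = C₀ * ε ^ (-(⌈1 + C₁ * C₂ * A⌉₊ : ℝ)) := by
        rw [exp_mul_abs_log_eq_rpow_neg _ hε.1 (hε.2.trans (exp_lt_one_iff.2 (by norm_num)))]

/-- moderateness (a priori) estimate for the regularized
Volterra system: under the hypotheses above with `b + m ≤ 1`,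
`sup_{[0,A]} ‖f‖ ≤ C₀·|log ε|·exp(C₁C₂|log ε|^{b+m}·A)`; in particular there
are `C > 0` and `N ∈ ℕ` independent of `ε` with `sup_{[0,A]} ‖f‖ ≤ C·ε^{-N}`. -/
theorem stmt_15 (A : ℝ) (hA : 0 < A) (n : ℕ) (hn : 1 ≤ n)
    (b m : ℝ) (hb : 0 ≤ b) (hm : 0 ≤ m) (hbm : b + m ≤ 1)
    (C₀ C₁ C₂ : ℝ) (hC₀ : 0 < C₀) (hC₁ : 0 < C₁) (hC₂ : 0 < C₂) :
    (∀ ε ∈ Ioo (0 : ℝ) (Real.exp (-1)),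
      ∀ (g : ℝ → EuclideanSpace ℝ (Fin n))
        (k : ℝ → ℝ → EuclideanSpace ℝ (Fin n) → EuclideanSpace ℝ (Fin n))
        (h : ℝ → ℝ → ℝ) (f : ℝ → EuclideanSpace ℝ (Fin n)),
        VolterraHyp A b m C₀ C₁ C₂ ε g k h f →
        ∀ x ∈ Icc (0 : ℝ) A,
          ‖f x‖ ≤ C₀ * |Real.log ε| *
            Real.exp (C₁ * C₂ * |Real.log ε| ^ (b + m) * A)) ∧
    ∃ C > (0 : ℝ), ∃ N : ℕ, ∀ ε ∈ Ioo (0 : ℝ) (Real.exp (-1)),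
      ∀ (g : ℝ → EuclideanSpace ℝ (Fin n))
        (k : ℝ → ℝ → EuclideanSpace ℝ (Fin n) → EuclideanSpace ℝ (Fin n))
        (h : ℝ → ℝ → ℝ) (f : ℝ → EuclideanSpace ℝ (Fin n)),
        VolterraHyp A b m C₀ C₁ C₂ ε g k h f →
        ∀ x ∈ Icc (0 : ℝ) A, ‖f x‖ ≤ C * ε ^ (-(N : ℝ)) :=
  stmt_15_general A n b m hbm C₀ C₁ C₂ hC₀ hC₁ hC₂
end
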